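/- arXiv:2411.13083 — 8 statements merged into one kernel-verified Lean document; each statement's English description precedes it below -/
import Mathlib

section
/- Let X be a measurable space and D a probability distribution on X × {0,1}. Let p : X → [0,1] be a measurable predictor, let I ⊆ ℝ be an interval containing 0, let σ : I → [0,1] be a non-decreasing link function, and let g : [0,1] → I satisfy σ(g(v)) = v for all v ∈ [0,1]. Then for every measurable function c : X → I (with all relevant expectations finite), E_{(x,y)∼D}[ℓ_{m,σ}(g(p(x)), y)] − E_{(x,y)∼D}[ℓ_{m,σ}(c(x), y)] ≤ E_{(x,y)∼D}[(p(x) − y)(g(p(x)) − c(x))]. -/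
open MeasureTheory

/-- The label of an outcome `b ∈ {0,1}`, as a real number. -/
def label (b : Bool) : ℝ := if b then 1 else 0

/-- The matching loss `ℓ_{m,σ}(t,y) = ∫_0^t (σ(τ) - y) dτ` induced by a link function `σ`. -/
noncomputable def matchingLoss (σ : ℝ → ℝ) (t y : ℝ) : ℝ := ∫ τ in (0:ℝ)..t, (σ τ - y)

lemma key {σ : ℝ → ℝ} {I : Set ℝ} (hI : I.OrdConnected) (h0I : (0:ℝ) ∈ I)
    (hmono : MonotoneOn σ I) {s t : ℝ} (hs : s ∈ I) (ht : t ∈ I) (y : ℝ) :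
    matchingLoss σ t y - matchingLoss σ s y ≤ (σ t - y) * (t - s) := by
  have hii : ∀ a b : ℝ, a ∈ I → b ∈ I → IntervalIntegrable (fun τ => σ τ - y) volume a b := by
    intro a b ha hb
    have hsub : Set.uIcc a b ⊆ I := hI.uIcc_subset ha hb
    exact ((hmono.mono hsub).intervalIntegrable).sub intervalIntegrable_const
  have hsplit : matchingLoss σ t y - matchingLoss σ s y = ∫ τ in s..t, (σ τ - y) := by
    rw [matchingLoss, matchingLoss, ← intervalIntegral.integral_add_adjacent_intervals
      (hii 0 s h0I hs) (hii s t hs ht)]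
    ring
  rw [hsplit]
  rcases le_total s t with h | h
  · have : (∫ τ in s..t, (σ τ - y)) ≤ ∫ τ in s..t, (σ t - y) := by
      apply intervalIntegral.integral_mono_on h (hii s t hs ht) intervalIntegrable_const
      intro τ hτ
      have hτI : τ ∈ I := hI.out hs ht ⟨hτ.1, hτ.2⟩
      exact sub_le_sub_right (hmono hτI ht hτ.2) y
    calc _ ≤ ∫ τ in s..t, (σ t - y) := this
      _ = (σ t - y) * (t - s) := by rw [intervalIntegral.integral_const, smul_eq_mul]; ring
  · have : (∫ τ in t..s, (σ t - y)) ≤ ∫ τ in t..s, (σ τ - y) := by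
      apply intervalIntegral.integral_mono_on h intervalIntegrable_const (hii t s ht hs)
      intro τ hτ
      have hτI : τ ∈ I := hI.out ht hs ⟨hτ.1, hτ.2⟩
      exact sub_le_sub_right (hmono ht hτI hτ.1) y
    rw [intervalIntegral.integral_symm t s]
    have := neg_le_neg this
    calc -(∫ τ in t..s, (σ τ - y)) ≤ -∫ τ in t..s, (σ t - y) := this
      _ = (σ t - y) * (t - s) := by rw [intervalIntegral.integral_const, smul_eq_mul]; ring

/-- Omnigap bounds the excess proper loss of `p` over the matching loss of any comparator `c`. -/
theorem omnigap_bounds_loss_difference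
    {X : Type*} [MeasurableSpace X]
    (D : Measure (X × Bool)) [IsProbabilityMeasure D]
    (p : X → ℝ) (hp_meas : Measurable p) (hp_range : ∀ x, p x ∈ Set.Icc (0:ℝ) 1)
    (I : Set ℝ) (hI : I.OrdConnected) (h0I : (0:ℝ) ∈ I)
    (σ : ℝ → ℝ) (hσ_mono : MonotoneOn σ I)
    (hσ_range : ∀ t ∈ I, σ t ∈ Set.Icc (0:ℝ) 1)
    (g : ℝ → ℝ) (hg_range : ∀ v ∈ Set.Icc (0:ℝ) 1, g v ∈ I)
    (hσg : ∀ v ∈ Set.Icc (0:ℝ) 1, σ (g v) = v)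
    (c : X → ℝ) (hc_meas : Measurable c) (hc_range : ∀ x, c x ∈ I)
    (hint1 : Integrable (fun z : X × Bool => matchingLoss σ (g (p z.1)) (label z.2)) D)
    (hint2 : Integrable (fun z : X × Bool => matchingLoss σ (c z.1) (label z.2)) D)
    (hint3 : Integrable (fun z : X × Bool => (p z.1 - label z.2) * (g (p z.1) - c z.1)) D) :
    (∫ z, matchingLoss σ (g (p z.1)) (label z.2) ∂D)
      - (∫ z, matchingLoss σ (c z.1) (label z.2) ∂D)
      ≤ ∫ z, (p z.1 - label z.2) * (g (p z.1) - c z.1) ∂D := by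
  rw [← integral_sub hint1 hint2]
  refine integral_mono (hint1.sub hint2) hint3 ?_
  intro z
  have hv := hp_range z.1
  have h := key hI h0I hσ_mono (hc_range z.1) (hg_range _ hv) (label z.2)
  rw [hσg _ hv] at h
  simpa [mul_comm] using h
end

section
/- Let d ∈ ℕ, L, R, β > 0, ε ∈ (0, LR), and α ∈ (0, ε/(6L²R²)). Let D be a probability distribution on X × {0,1} with X ⊆ B(L) ⊆ ℝ^d, let Ω be a set, and let p : X → Ω. Suppose that for every non-decreasing (α, α+(1−2αLR)β)-bi-Lipschitz function σ′ : [−LR, LR] → [0,1] there exists k_{σ′} : Ω → [−LR, LR] such that for all w ∈ B(R): E_{(x,y)∼D}[ℓ_{m,σ′}(k_{σ′}(p(x)), y)] ≤ E_{(x,y)∼D}[ℓ_{m,σ′}(w·x, y)] + ε/2. Then for every non-decreasing β-Lipschitz σ : [−LR, LR] → [0,1] there exists k_σ : Ω → [−LR, LR] such that for all w ∈ B(R): E_{(x,y)∼D}[ℓ_{m,σ}(k_σ(p(x)), y)] ≤ E_{(x,y)∼D}[ℓ_{m,σ}(w·x, y)] + ε. -/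
open MeasureTheory

/-- The inner product on `ℝ^d`. -/
noncomputable def dotp {d : ℕ} (w x : EuclideanSpace ℝ (Fin d)) : ℝ := inner ℝ w x

/-- `σ` is `(a,b)`-bi-Lipschitz on the set `s`:
`a (y - x) ≤ σ(y) - σ(x) ≤ b (y - x)` for all `x ≤ y` in `s`. -/
def BiLipOn (a b : ℝ) (σ : ℝ → ℝ) (s : Set ℝ) : Prop :=
  ∀ ⦃x⦄, x ∈ s → ∀ ⦃y⦄, y ∈ s → x ≤ y →
    a * (y - x) ≤ σ y - σ x ∧ σ y - σ x ≤ b * (y - x)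

/-- A strictly monotone function on a compact interval admits a measurable left inverse. -/
lemma exists_measurable_leftInv {a b : ℝ} {F : ℝ → ℝ} (hab : a ≤ b)
    (hF : StrictMonoOn F (Set.Icc a b)) :
    ∃ G : ℝ → ℝ, Measurable G ∧ ∀ t ∈ Set.Icc a b, G (F t) = t := by
  set G : ℝ → ℝ := fun v => sSup (insert a {t | t ∈ Set.Icc a b ∧ F t ≤ v}) with hG
  have hbdd : ∀ v : ℝ, BddAbove (insert a {t | t ∈ Set.Icc a b ∧ F t ≤ v}) := by
    intro v
    refine ⟨b, ?_⟩
    rintro x (rfl | ⟨hx, _⟩)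
    · exact hab
    · exact hx.2
  have hGmono : Monotone G := by
    intro v w hvw
    apply csSup_le_csSup (hbdd w) ⟨a, Set.mem_insert _ _⟩
    rintro x (rfl | ⟨hx, hFx⟩)
    · exact Set.mem_insert _ _
    · exact Set.mem_insert_of_mem _ ⟨hx, hFx.trans hvw⟩
  refine ⟨G, hGmono.measurable, ?_⟩
  intro t ht
  apply le_antisymm
  · apply csSup_le ⟨a, Set.mem_insert _ _⟩
    rintro x (rfl | ⟨hx, hFx⟩)
    · exact ht.1
    · by_contra hlt
      push_neg at hlt
      exact absurd hFx (not_le.mpr (hF ht hx hlt))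
  · exact le_csSup (hbdd _) (Set.mem_insert_of_mem _ ⟨ht, le_rfl⟩)

/-- The primitive of a link function. -/
noncomputable def primi (σ : ℝ → ℝ) (t : ℝ) : ℝ := ∫ τ in (0:ℝ)..t, σ τ

/-- Clamping to `[-M, M]`. -/
def clampI (M v : ℝ) : ℝ := min M (max (-M) v)

lemma clampI_mem {M : ℝ} (hM : 0 ≤ M) (v : ℝ) : clampI M v ∈ Set.Icc (-M) M :=
  ⟨le_min (by linarith) (le_max_left _ _), min_le_left _ _⟩

lemma clampI_eq {M v : ℝ} (hv : v ∈ Set.Icc (-M) M) : clampI M v = v := by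
  unfold clampI
  rw [max_eq_right hv.1, min_eq_right hv.2]

lemma clampI_mono (M : ℝ) : Monotone (clampI M) :=
  fun _ _ h => min_le_min le_rfl (max_le_max le_rfl h)

lemma aux_ii {M : ℝ} {σ : ℝ → ℝ} (hσ : MonotoneOn σ (Set.Icc (-M) M)) {s t : ℝ}
    (hs : s ∈ Set.Icc (-M) M) (ht : t ∈ Set.Icc (-M) M) :
    IntervalIntegrable σ volume s t :=
  (hσ.mono (Set.uIcc_subset_Icc hs ht)).intervalIntegrable

lemma aux_ml {M : ℝ} {σ : ℝ → ℝ} (hM : 0 ≤ M) (hσ : MonotoneOn σ (Set.Icc (-M) M))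
    {t : ℝ} (ht : t ∈ Set.Icc (-M) M) (y : ℝ) :
    matchingLoss σ t y = primi σ t - y * t := by
  have h0 : (0:ℝ) ∈ Set.Icc (-M) M := ⟨by linarith, hM⟩
  unfold matchingLoss primi
  rw [intervalIntegral.integral_sub (aux_ii hσ h0 ht) intervalIntegrable_const,
    intervalIntegral.integral_const, smul_eq_mul]
  ring

lemma aux_primi_sub {M : ℝ} {σ : ℝ → ℝ} (hM : 0 ≤ M) (hσ : MonotoneOn σ (Set.Icc (-M) M))
    {s t : ℝ} (hs : s ∈ Set.Icc (-M) M) (ht : t ∈ Set.Icc (-M) M) :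
    primi σ t - primi σ s = ∫ τ in s..t, σ τ := by
  have h0 : (0:ℝ) ∈ Set.Icc (-M) M := ⟨by linarith, hM⟩
  unfold primi
  exact intervalIntegral.integral_interval_sub_left (aux_ii hσ h0 ht) (aux_ii hσ h0 hs)

lemma aux_primi_abs {M : ℝ} {σ : ℝ → ℝ} (hM : 0 ≤ M)
    (hr : ∀ τ ∈ Set.Icc (-M) M, σ τ ∈ Set.Icc (0:ℝ) 1)
    {t : ℝ} (ht : t ∈ Set.Icc (-M) M) : |primi σ t| ≤ M := by
  have h0 : (0:ℝ) ∈ Set.Icc (-M) M := ⟨by linarith, hM⟩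
  have hb : ∀ x ∈ Set.uIoc (0:ℝ) t, ‖σ x‖ ≤ 1 := by
    intro x hx
    have hxI : x ∈ Set.Icc (-M) M :=
      Set.uIcc_subset_Icc h0 ht (Set.Ioc_subset_Icc_self hx)
    have := hr x hxI
    rw [Real.norm_eq_abs, abs_le]
    exact ⟨by linarith [this.1], this.2⟩
  have h := intervalIntegral.norm_integral_le_of_norm_le_const (a := (0:ℝ)) (b := t) (C := 1)
    (f := σ) hb
  rw [Real.norm_eq_abs] at h
  have ht' : |t - 0| ≤ M := by
    rw [sub_zero, abs_le]
    exact ⟨ht.1, ht.2⟩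
  calc |primi σ t| = |∫ τ in (0:ℝ)..t, σ τ| := rfl
    _ ≤ 1 * |t - 0| := h
    _ ≤ M := by linarith

lemma aux_primiC_meas {M : ℝ} {σ : ℝ → ℝ} (hM : 0 ≤ M) (hσ : MonotoneOn σ (Set.Icc (-M) M))
    (hr : ∀ τ ∈ Set.Icc (-M) M, σ τ ∈ Set.Icc (0:ℝ) 1) :
    Measurable (fun v => primi σ (clampI M v)) := by
  have hmono : Monotone fun v => primi σ (clampI M v) := by
    intro x y hxy
    have h1 := clampI_mem hM x
    have h2 := clampI_mem hM y
    have hd := aux_primi_sub hM hσ h1 h2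
    have h0 : 0 ≤ ∫ τ in (clampI M x)..(clampI M y), σ τ :=
      intervalIntegral.integral_nonneg (clampI_mono M hxy)
        (fun u hu => (hr u ⟨le_trans h1.1 hu.1, le_trans hu.2 h2.2⟩).1)
    simp only []
    linarith
  exact hmono.measurable

set_option maxHeartbeats 1000000 in
/-- An `(ε/2)`-omnipredictor against mildly anti-Lipschitz links is an `ε`-omnipredictor
against all monotone `β`-Lipschitz links. -/
theorem omniprediction_from_antiLipschitz
    (d : ℕ) (L R β ε α : ℝ) (hL : 0 < L) (hR : 0 < R) (hβ : 0 < β)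
    (hε : ε ∈ Set.Ioo (0:ℝ) (L * R)) (hα : α ∈ Set.Ioo (0:ℝ) (ε / (6 * L^2 * R^2)))
    (D : Measure (EuclideanSpace ℝ (Fin d) × Bool)) [IsProbabilityMeasure D]
    (hX : ∀ᵐ z ∂D, ‖z.1‖ ≤ L)
    (Ω : Type*) (p : EuclideanSpace ℝ (Fin d) → Ω)
    (hyp : ∀ σ' : ℝ → ℝ,
      BiLipOn α (α + (1 - 2*α*L*R) * β) σ' (Set.Icc (-(L*R)) (L*R)) →
      (∀ t ∈ Set.Icc (-(L*R)) (L*R), σ' t ∈ Set.Icc (0:ℝ) 1) →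
      ∃ k : Ω → ℝ, (∀ ω, k ω ∈ Set.Icc (-(L*R)) (L*R)) ∧
        ∀ w : EuclideanSpace ℝ (Fin d), ‖w‖ ≤ R →
          (∫ z, matchingLoss σ' (k (p z.1)) (label z.2) ∂D)
            ≤ (∫ z, matchingLoss σ' (dotp w z.1) (label z.2) ∂D) + ε / 2) :
    ∀ σ : ℝ → ℝ,
      BiLipOn 0 β σ (Set.Icc (-(L*R)) (L*R)) →
      (∀ t ∈ Set.Icc (-(L*R)) (L*R), σ t ∈ Set.Icc (0:ℝ) 1) →
      ∃ k : Ω → ℝ, (∀ ω, k ω ∈ Set.Icc (-(L*R)) (L*R)) ∧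
        ∀ w : EuclideanSpace ℝ (Fin d), ‖w‖ ≤ R →
          (∫ z, matchingLoss σ (k (p z.1)) (label z.2) ∂D)
            ≤ (∫ z, matchingLoss σ (dotp w z.1) (label z.2) ∂D) + ε := by
  obtain ⟨hε0, hεM⟩ := hε
  obtain ⟨hα0, hα2⟩ := hα
  intro σ hσbl hσr
  have hM : 0 < L * R := mul_pos hL hR
  have hα6 : α * (6 * L ^ 2 * R ^ 2) < ε := (lt_div_iff₀ (by positivity)).mp hα2
  have hMM : (L * R) * (L * R) = L ^ 2 * R ^ 2 := by ring
  have hαM : 2 * α * (L * R) ≤ 1 / 3 := by nlinarith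
  have h2aM2 : 2 * α * ((L * R) * (L * R)) ≤ ε / 3 := by nlinarith
  have hc0 : 0 ≤ 1 - 2 * α * L * R := by nlinarith
  set σ' : ℝ → ℝ := fun t => (1 - 2*α*L*R) * σ t + α * (t + L*R) with hσ'def
  have hI0 : (0:ℝ) ∈ Set.Icc (-(L*R)) (L*R) := ⟨by linarith, by linarith⟩
  -- monotonicity of σ and σ'
  have hσmono : MonotoneOn σ (Set.Icc (-(L*R)) (L*R)) := by
    intro x hx y hy hxy
    nlinarith [(hσbl hx hy hxy).1]
  have hσ'mono : MonotoneOn σ' (Set.Icc (-(L*R)) (L*R)) := by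
    intro x hx y hy hxy
    have h1 := (hσbl hx hy hxy).1
    simp only [hσ'def]
    nlinarith [mul_le_mul_of_nonneg_left (by nlinarith : σ x ≤ σ y) hc0]
  -- bi-Lipschitz property of σ'
  have hσ'bl : BiLipOn α (α + (1 - 2*α*L*R) * β) σ' (Set.Icc (-(L*R)) (L*R)) := by
    intro x hx y hy hxy
    obtain ⟨h1, h2⟩ := hσbl hx hy hxy
    constructor
    · simp only [hσ'def]
      nlinarith [mul_nonneg hc0 (by nlinarith : (0:ℝ) ≤ σ y - σ x)]
    · simp only [hσ'def]
      nlinarith [mul_le_mul_of_nonneg_left h2 hc0]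
  -- range of σ'
  have hσ'r : ∀ t ∈ Set.Icc (-(L*R)) (L*R), σ' t ∈ Set.Icc (0:ℝ) 1 := by
    intro t ht
    obtain ⟨h0, h1⟩ := hσr t ht
    obtain ⟨ht1, ht2⟩ := ht
    constructor
    · simp only [hσ'def]
      nlinarith [mul_nonneg hc0 h0]
    · simp only [hσ'def]
      nlinarith [mul_le_mul_of_nonneg_left h1 hc0]
  obtain ⟨k, hkmem, hkopt⟩ := hyp σ' hσ'bl hσ'r
  -- integral of affine functions
  have hintaff : ∀ (C s t : ℝ), IntervalIntegrable (fun τ => α * (τ + C)) volume s t := by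
    intro C s t
    exact (Continuous.intervalIntegrable (by fun_prop) _ _)
  have intAff : ∀ (C s t : ℝ),
      (∫ τ in s..t, α * (τ + C)) = α * ((t^2 - s^2)/2 + C*(t - s)) := by
    intro C s t
    have hid : IntervalIntegrable (fun x : ℝ => x) volume s t :=
      Continuous.intervalIntegrable continuous_id' s t
    rw [intervalIntegral.integral_const_mul,
      intervalIntegral.integral_add hid intervalIntegrable_const,
      integral_id, intervalIntegral.integral_const, smul_eq_mul]
    ring
  -- bounds on σ' - σ
  have hub : ∀ τ ∈ Set.Icc (-(L*R)) (L*R), σ' τ - σ τ ≤ α * (τ + L*R) := by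
    intro τ hτ
    have h0 := (hσr τ hτ).1
    simp only [hσ'def]
    nlinarith [mul_nonneg (mul_nonneg (by linarith : (0:ℝ) ≤ 2*α) hM.le) h0]
  have hlb : ∀ τ ∈ Set.Icc (-(L*R)) (L*R), α * (τ + -(L*R)) ≤ σ' τ - σ τ := by
    intro τ hτ
    have h1 := (hσr τ hτ).2
    simp only [hσ'def]
    nlinarith [mul_le_mul_of_nonneg_left h1 (by positivity : (0:ℝ) ≤ 2*α*(L*R))]
  -- H := primi σ' - primi σ and its oscillation bound
  have hintdiff : ∀ {s t : ℝ}, s ∈ Set.Icc (-(L*R)) (L*R) → t ∈ Set.Icc (-(L*R)) (L*R) →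
      IntervalIntegrable (fun τ => σ' τ - σ τ) volume s t :=
    fun hs ht => (aux_ii hσ'mono hs ht).sub (aux_ii hσmono hs ht)
  have hHdiff : ∀ {s t : ℝ}, s ∈ Set.Icc (-(L*R)) (L*R) → t ∈ Set.Icc (-(L*R)) (L*R) →
      (primi σ' t - primi σ t) - (primi σ' s - primi σ s) = ∫ τ in s..t, (σ' τ - σ τ) := by
    intro s t hs ht
    rw [intervalIntegral.integral_sub (aux_ii hσ'mono hs ht) (aux_ii hσmono hs ht)]
    have e1 := aux_primi_sub hM.le hσ'mono hs ht
    have e2 := aux_primi_sub hM.le hσmono hs ht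
    linarith
  have hHbnd : ∀ s ∈ Set.Icc (-(L*R)) (L*R), ∀ t ∈ Set.Icc (-(L*R)) (L*R),
      (primi σ' t - primi σ t) - (primi σ' s - primi σ s) ≤ 2 * α * ((L*R) * (L*R)) := by
    intro s hs t ht
    rcases le_total s t with hst | hst
    · rw [hHdiff hs ht]
      have h1 : (∫ τ in s..t, (σ' τ - σ τ)) ≤ ∫ τ in s..t, α * (τ + L*R) :=
        intervalIntegral.integral_mono_on hst (hintdiff hs ht) (hintaff _ s t)
          (fun x hx => hub x ⟨le_trans hs.1 hx.1, le_trans hx.2 ht.2⟩)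
      rw [intAff] at h1
      obtain ⟨hs1, hs2⟩ := hs
      obtain ⟨ht1, ht2⟩ := ht
      have e1 : 0 ≤ t + L*R := by linarith
      have e2 : t + L*R ≤ 2*(L*R) := by linarith
      have key : (t^2 - s^2)/2 + (L*R)*(t - s) ≤ 2*((L*R)*(L*R)) := by
        nlinarith [sq_nonneg (s + L*R), mul_le_mul e2 e2 e1 (by linarith)]
      nlinarith [mul_le_mul_of_nonneg_left key hα0.le]
    · rw [hHdiff hs ht, intervalIntegral.integral_symm]
      have h1 : (∫ τ in t..s, α * (τ + -(L*R))) ≤ ∫ τ in t..s, (σ' τ - σ τ) :=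
        intervalIntegral.integral_mono_on hst (hintaff _ t s) (hintdiff ht hs)
          (fun x hx => hlb x ⟨le_trans ht.1 hx.1, le_trans hx.2 hs.2⟩)
      rw [intAff] at h1
      obtain ⟨hs1, hs2⟩ := hs
      obtain ⟨ht1, ht2⟩ := ht
      have e1 : 0 ≤ L*R - t := by linarith
      have e2 : L*R - t ≤ 2*(L*R) := by linarith
      have key : -(2*((L*R)*(L*R))) ≤ (s^2 - t^2)/2 + (-(L*R))*(s - t) := by
        nlinarith [sq_nonneg (s - L*R), mul_le_mul e2 e2 e1 (by linarith)]
      nlinarith [mul_le_mul_of_nonneg_left key hα0.le]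
  -- strict monotonicity of primi σ' and strict antitonicity of primi σ' - id
  have hPhi'smono : StrictMonoOn (primi σ') (Set.Icc (-(L*R)) (L*R)) := by
    intro s hs t ht hst
    have hd := aux_primi_sub hM.le hσ'mono hs ht
    have h1 : (∫ τ in s..t, α * (τ + L*R)) ≤ ∫ τ in s..t, σ' τ := by
      refine intervalIntegral.integral_mono_on hst.le (hintaff _ s t)
        (aux_ii hσ'mono hs ht) (fun x hx => ?_)
      have hxI : x ∈ Set.Icc (-(L*R)) (L*R) := ⟨le_trans hs.1 hx.1, le_trans hx.2 ht.2⟩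
      have h0 := (hσr x hxI).1
      simp only [hσ'def]
      nlinarith [mul_nonneg hc0 h0]
    rw [intAff] at h1
    have hpos : 0 < α * ((t^2 - s^2)/2 + (L*R)*(t - s)) := by
      have hX : 0 < (t^2 - s^2)/2 + (L*R)*(t - s) := by
        nlinarith [mul_pos (sub_pos.mpr hst) (show (0:ℝ) < t + s + 2*(L*R) by
          have := hs.1; linarith)]
      exact mul_pos hα0 hX
    linarith
  have hPsianti : StrictMonoOn (fun t => -(primi σ' t - t)) (Set.Icc (-(L*R)) (L*R)) := by
    intro s hs t ht hst
    have hd := aux_primi_sub hM.le hσ'mono hs ht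
    have h1 : (∫ τ in s..t, σ' τ) ≤ ∫ τ in s..t, (1 + α * (τ + -(L*R))) := by
      refine intervalIntegral.integral_mono_on hst.le (aux_ii hσ'mono hs ht)
        ((intervalIntegrable_const).add (hintaff _ s t)) (fun x hx => ?_)
      have hxI : x ∈ Set.Icc (-(L*R)) (L*R) := ⟨le_trans hs.1 hx.1, le_trans hx.2 ht.2⟩
      have hr1 := (hσr x hxI).2
      simp only [hσ'def]
      nlinarith [mul_le_mul_of_nonneg_left hr1 hc0]
    rw [intervalIntegral.integral_add intervalIntegrable_const (hintaff _ s t),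
      intervalIntegral.integral_const, intAff, smul_eq_mul] at h1
    have hneg : α * ((t^2 - s^2)/2 + (-(L*R))*(t - s)) < 0 := by
      have hX : (t^2 - s^2)/2 + (-(L*R))*(t - s) < 0 := by
        nlinarith [mul_pos (sub_pos.mpr hst) (show (0:ℝ) < 2*(L*R) - t - s by
          have h1 := ht.2; have h2 := hs.2; linarith)]
      exact mul_neg_of_pos_of_neg hα0 hX
    simp only []
    linarith
  -- shared facts about the linear predictors
  have hdotmem : ∀ w : EuclideanSpace ℝ (Fin d), ‖w‖ ≤ R →
      ∀ᵐ z ∂D, dotp w z.1 ∈ Set.Icc (-(L*R)) (L*R) := by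
    intro w hw
    refine hX.mono (fun z hz => ?_)
    have h1 : |dotp w z.1| ≤ ‖w‖ * ‖z.1‖ := by
      simp only [dotp]
      exact abs_real_inner_le_norm w z.1
    have h2 : ‖w‖ * ‖z.1‖ ≤ R * L :=
      mul_le_mul hw hz (norm_nonneg _) hR.le
    rw [abs_le] at h1
    constructor <;> nlinarith [h1.1, h1.2]
  have hdotmeas : ∀ w : EuclideanSpace ℝ (Fin d),
      Measurable (fun z : EuclideanSpace ℝ (Fin d) × Bool => dotp w z.1) := by
    intro w
    have : Continuous (fun x : EuclideanSpace ℝ (Fin d) => (inner ℝ w x : ℝ)) :=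
      Continuous.inner continuous_const continuous_id
    simp only [dotp]
    exact this.measurable.comp measurable_fst
  have hsndmeas : MeasurableSet {z : EuclideanSpace ℝ (Fin d) × Bool | z.2 = true} :=
    measurable_snd (measurableSet_singleton true)
  have hlabelmeas : Measurable (fun z : EuclideanSpace ℝ (Fin d) × Bool => label z.2) := by
    unfold label
    exact Measurable.ite hsndmeas measurable_const measurable_const
  have hlabelabs : ∀ b : Bool, |label b| ≤ 1 := by
    intro b
    cases b <;> simp [label]
  -- integrability of linear-predictor losses, for both σ and σ'
  have hgint : ∀ (ρ : ℝ → ℝ), MonotoneOn ρ (Set.Icc (-(L*R)) (L*R)) →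
      (∀ τ ∈ Set.Icc (-(L*R)) (L*R), ρ τ ∈ Set.Icc (0:ℝ) 1) →
      ∀ w : EuclideanSpace ℝ (Fin d), ‖w‖ ≤ R →
      Integrable (fun z => matchingLoss ρ (dotp w z.1) (label z.2)) D := by
    intro ρ hρm hρr w hw
    have hmodel : Integrable (fun z : EuclideanSpace ℝ (Fin d) × Bool =>
        primi ρ (clampI (L*R) (dotp w z.1)) - label z.2 * clampI (L*R) (dotp w z.1)) D := by
      have hmeas : AEStronglyMeasurable (fun z : EuclideanSpace ℝ (Fin d) × Bool =>
          primi ρ (clampI (L*R) (dotp w z.1)) - label z.2 * clampI (L*R) (dotp w z.1)) D := by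
        refine (Measurable.sub ?_ ?_).aestronglyMeasurable
        · exact (aux_primiC_meas hM.le hρm hρr).comp (hdotmeas w)
        · exact hlabelmeas.mul (((clampI_mono (L*R)).measurable).comp (hdotmeas w))
      refine Integrable.mono' (integrable_const (L*R + L*R)) hmeas (ae_of_all _ (fun z => ?_))
      have b1 : |primi ρ (clampI (L*R) (dotp w z.1))| ≤ L*R :=
        aux_primi_abs hM.le hρr (clampI_mem hM.le _)
      have b2 : |clampI (L*R) (dotp w z.1)| ≤ L*R := by
        have := clampI_mem hM.le (M := L*R) (dotp w z.1)
        rw [abs_le]; exact ⟨this.1, this.2⟩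
      have b3 := hlabelabs z.2
      rw [Real.norm_eq_abs]
      calc |primi ρ (clampI (L*R) (dotp w z.1)) - label z.2 * clampI (L*R) (dotp w z.1)|
          ≤ |primi ρ (clampI (L*R) (dotp w z.1))| + |label z.2 * clampI (L*R) (dotp w z.1)| :=
            abs_sub _ _
        _ ≤ L*R + L*R := by
            rw [abs_mul]
            have : |label z.2| * |clampI (L*R) (dotp w z.1)| ≤ 1 * (L*R) :=
              mul_le_mul b3 b2 (abs_nonneg _) zero_le_one
            linarith
    refine hmodel.congr ?_
    refine (hdotmem w hw).mono (fun z hz => ?_)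
    simp only [clampI_eq hz, aux_ml hM.le hρm hz]
  -- main case distinction on integrability of the predictor's σ'-loss
  by_cases hfi' : Integrable (fun z => matchingLoss σ' (k (p z.1)) (label z.2)) D
  · -- main case: use k itself
    refine ⟨k, hkmem, ?_⟩
    intro w hw
    -- measurable recovery of u := k ∘ p ∘ fst
    obtain ⟨G₀, hG₀m, hG₀⟩ := exists_measurable_leftInv (by linarith : -(L*R) ≤ L*R) hPhi'smono
    obtain ⟨G₁, hG₁m, hG₁⟩ := exists_measurable_leftInv (by linarith : -(L*R) ≤ L*R) hPsianti
    have hueq : (fun z : EuclideanSpace ℝ (Fin d) × Bool => k (p z.1))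
        = fun z => if z.2 = true then G₁ (-(matchingLoss σ' (k (p z.1)) (label z.2)))
            else G₀ (matchingLoss σ' (k (p z.1)) (label z.2)) := by
      funext z
      obtain ⟨x, b⟩ := z
      have hmem := hkmem (p x)
      cases b
      · show k (p x) = G₀ (matchingLoss σ' (k (p x)) (label false))
        rw [aux_ml hM.le hσ'mono hmem, show label false = (0:ℝ) from rfl, zero_mul, sub_zero]
        exact (hG₀ _ hmem).symm
      · show k (p x) = G₁ (-(matchingLoss σ' (k (p x)) (label true)))
        rw [aux_ml hM.le hσ'mono hmem, show label true = (1:ℝ) from rfl, one_mul]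
        exact (hG₁ _ hmem).symm
    have hum : AEMeasurable (fun z : EuclideanSpace ℝ (Fin d) × Bool => k (p z.1)) D := by
      rw [hueq]
      have houter : Measurable (fun q : ℝ × Bool => if q.2 = true then G₁ (-q.1) else G₀ q.1) := by
        refine Measurable.ite ?_ (hG₁m.comp (measurable_fst.neg)) (hG₀m.comp measurable_fst)
        exact measurable_snd (measurableSet_singleton true)
      exact houter.comp_aemeasurable
        ((hfi'.aemeasurable).prodMk measurable_snd.aemeasurable)
    -- integrability of the predictor's σ-loss
    have hfeq : (fun z : EuclideanSpace ℝ (Fin d) × Bool => matchingLoss σ (k (p z.1)) (label z.2))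
        = fun z => primi σ (clampI (L*R) (k (p z.1))) - label z.2 * k (p z.1) := by
      funext z
      rw [aux_ml hM.le hσmono (hkmem (p z.1)), clampI_eq (hkmem (p z.1))]
    have hfi : Integrable (fun z => matchingLoss σ (k (p z.1)) (label z.2)) D := by
      rw [hfeq]
      have hmeas : AEStronglyMeasurable (fun z : EuclideanSpace ℝ (Fin d) × Bool =>
          primi σ (clampI (L*R) (k (p z.1))) - label z.2 * k (p z.1)) D := by
        refine (AEMeasurable.sub ?_ ?_).aestronglyMeasurable
        · exact (aux_primiC_meas hM.le hσmono hσr).comp_aemeasurable hum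
        · exact hlabelmeas.aemeasurable.mul hum
      refine Integrable.mono' (integrable_const (L*R + L*R)) hmeas (ae_of_all _ (fun z => ?_))
      have b1 : |primi σ (clampI (L*R) (k (p z.1)))| ≤ L*R :=
        aux_primi_abs hM.le hσr (clampI_mem hM.le _)
      have b2 : |k (p z.1)| ≤ L*R := by
        have := hkmem (p z.1)
        rw [abs_le]; exact ⟨this.1, this.2⟩
      have b3 := hlabelabs z.2
      rw [Real.norm_eq_abs]
      calc |primi σ (clampI (L*R) (k (p z.1))) - label z.2 * k (p z.1)|
          ≤ |primi σ (clampI (L*R) (k (p z.1)))| + |label z.2 * k (p z.1)| := abs_sub _ _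
        _ ≤ L*R + L*R := by
            rw [abs_mul]
            have : |label z.2| * |k (p z.1)| ≤ 1 * (L*R) :=
              mul_le_mul b3 b2 (abs_nonneg _) zero_le_one
            linarith
    have hgi := hgint σ hσmono hσr w hw
    have hgi' := hgint σ' hσ'mono hσ'r w hw
    -- a.e. pointwise bound
    have hae : ∀ᵐ z ∂D,
        ((matchingLoss σ' (dotp w z.1) (label z.2) - matchingLoss σ (dotp w z.1) (label z.2))
          - (matchingLoss σ' (k (p z.1)) (label z.2) - matchingLoss σ (k (p z.1)) (label z.2)))
        ≤ 2 * α * ((L*R) * (L*R)) := by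
      filter_upwards [hdotmem w hw] with z hz
      rw [aux_ml hM.le hσ'mono hz, aux_ml hM.le hσmono hz,
        aux_ml hM.le hσ'mono (hkmem (p z.1)), aux_ml hM.le hσmono (hkmem (p z.1))]
      have := hHbnd (k (p z.1)) (hkmem (p z.1)) (dotp w z.1) hz
      linarith
    have hint : ∫ z, ((matchingLoss σ' (dotp w z.1) (label z.2)
          - matchingLoss σ (dotp w z.1) (label z.2))
          - (matchingLoss σ' (k (p z.1)) (label z.2)
          - matchingLoss σ (k (p z.1)) (label z.2))) ∂D ≤ 2 * α * ((L*R) * (L*R)) := by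
      have h := integral_mono_ae ((hgi'.sub hgi).sub (hfi'.sub hfi))
        (integrable_const (2 * α * ((L*R) * (L*R)))) hae
      rwa [integral_const, probReal_univ, one_smul] at h
    have hopt := hkopt w hw
    have hsplit1 := integral_sub hgi' hgi
    have hsplit2 := integral_sub hfi' hfi
    have hsplit3 := integral_sub (hgi'.sub hgi) (hfi'.sub hfi)
    simp only [Pi.sub_def] at hsplit3
    linarith
  · -- degenerate case: predict the constant 0
    refine ⟨fun _ => (0:ℝ), fun _ => hI0, ?_⟩
    intro w hw
    have hzero : (fun z : EuclideanSpace ℝ (Fin d) × Bool =>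
        matchingLoss σ ((fun _ => (0:ℝ)) (p z.1)) (label z.2)) = fun _ => (0:ℝ) := by
      funext z
      simp [matchingLoss, intervalIntegral.integral_same]
    rw [hzero, integral_zero]
    have hopt := hkopt w hw
    rw [integral_undef hfi'] at hopt
    have hgi := hgint σ hσmono hσr w hw
    have hgi' := hgint σ' hσ'mono hσ'r w hw
    -- ∫ (g' - g) ≤ 2 α (LR)^2
    have hae : ∀ᵐ z ∂D,
        (matchingLoss σ' (dotp w z.1) (label z.2) - matchingLoss σ (dotp w z.1) (label z.2))
          ≤ 2 * α * ((L*R) * (L*R)) := by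
      filter_upwards [hdotmem w hw] with z hz
      rw [aux_ml hM.le hσ'mono hz, aux_ml hM.le hσmono hz]
      have h00 : primi σ' 0 = 0 := intervalIntegral.integral_same
      have h01 : primi σ 0 = 0 := intervalIntegral.integral_same
      have := hHbnd 0 hI0 (dotp w z.1) hz
      rw [h00, h01] at this
      linarith
    have hint : ∫ z, (matchingLoss σ' (dotp w z.1) (label z.2)
        - matchingLoss σ (dotp w z.1) (label z.2)) ∂D ≤ 2 * α * ((L*R) * (L*R)) := by
      have h := integral_mono_ae (hgi'.sub hgi)
        (integrable_const (2 * α * ((L*R) * (L*R)))) hae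
      rwa [integral_const, probReal_univ, one_smul] at h
    rw [integral_sub hgi' hgi] at hint
    linarith
end

section
/- Let L, R, β > 0 and α ∈ (0, 1/(2LR)). Let σ : [−LR, LR] → [0,1] be non-decreasing and β-Lipschitz, and define σ′(τ) := (1 − 2αLR)·σ(τ) + α(τ + LR). Then: (i) σ′ maps [−LR, LR] into [0,1]; (ii) σ′ is (α, α+(1−2αLR)β)-bi-Lipschitz; and (iii) for all t ∈ [−LR, LR] and y ∈ {0,1}, |ℓ_{m,σ′}(t, y) − ℓ_{m,σ}(t, y)| ≤ (3/2)·α·L²R². -/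
open MeasureTheory

/-- Perturbing a monotone `β`-Lipschitz link to an anti-Lipschitz one changes the
matching loss by at most `(3/2) α L² R²`. -/
theorem antiLipschitz_perturbation
    (L R β α : ℝ) (hL : 0 < L) (hR : 0 < R) (hβ : 0 < β)
    (hα : α ∈ Set.Ioo (0:ℝ) (1 / (2 * L * R)))
    (σ : ℝ → ℝ)
    (hσ_range : ∀ t ∈ Set.Icc (-(L*R)) (L*R), σ t ∈ Set.Icc (0:ℝ) 1)
    (hσ : BiLipOn 0 β σ (Set.Icc (-(L*R)) (L*R))) :
    (∀ t ∈ Set.Icc (-(L*R)) (L*R),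
        (1 - 2*α*L*R) * σ t + α * (t + L*R) ∈ Set.Icc (0:ℝ) 1) ∧
    BiLipOn α (α + (1 - 2*α*L*R) * β)
      (fun t => (1 - 2*α*L*R) * σ t + α * (t + L*R)) (Set.Icc (-(L*R)) (L*R)) ∧
    (∀ t ∈ Set.Icc (-(L*R)) (L*R), ∀ y : ℝ, y = 0 ∨ y = 1 →
        |matchingLoss (fun τ => (1 - 2*α*L*R) * σ τ + α * (τ + L*R)) t y
          - matchingLoss σ t y| ≤ (3/2) * α * L^2 * R^2) := by
  obtain ⟨hα0, hα1⟩ := hα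
  have hLR : 0 < L * R := mul_pos hL hR
  have hc : 0 < 1 - 2*α*L*R := by
    have := (lt_div_iff₀ (by positivity : (0:ℝ) < 2 * L * R)).mp hα1
    nlinarith
  have hmono : MonotoneOn σ (Set.Icc (-(L*R)) (L*R)) := by
    intro x hx y hy hxy
    have := (hσ hx hy hxy).1
    linarith [this]
  refine ⟨?_, ?_, ?_⟩
  · intro t ht
    obtain ⟨h0, h1⟩ := hσ_range t ht
    obtain ⟨ht1, ht2⟩ := ht
    constructor
    · nlinarith
    · nlinarith
  · intro x hx y hy hxy
    obtain ⟨h1, h2⟩ := hσ hx hy hxy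
    have hσd : 0 ≤ σ y - σ x := by linarith
    dsimp only
    constructor
    · nlinarith [mul_nonneg hc.le hσd]
    · nlinarith [mul_le_mul_of_nonneg_left h2 hc.le]
  · intro t ht y _
    obtain ⟨ht1, ht2⟩ := ht
    have hle : -(L*R) ≤ L*R := by linarith
    have h0mem : (0:ℝ) ∈ Set.Icc (-(L*R)) (L*R) := ⟨by linarith, by linarith⟩
    have hsub : Set.uIcc (0:ℝ) t ⊆ Set.Icc (-(L*R)) (L*R) := by
      rw [← Set.uIcc_of_le hle]
      exact Set.uIcc_subset_uIcc (by rw [Set.uIcc_of_le hle]; exact h0mem)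
        (by rw [Set.uIcc_of_le hle]; exact ⟨ht1, ht2⟩)
    have hσint : IntervalIntegrable σ volume 0 t :=
      (hmono.mono hsub).intervalIntegrable
    have hmono' : MonotoneOn (fun τ => (1 - 2*α*L*R) * σ τ + α * (τ + L*R))
        (Set.Icc (-(L*R)) (L*R)) := by
      intro a ha b hb hab
      have := hmono ha hb hab
      simp only
      nlinarith
    have hσ'int : IntervalIntegrable (fun τ => (1 - 2*α*L*R) * σ τ + α * (τ + L*R))
        volume 0 t := (hmono'.mono hsub).intervalIntegrable
    have hy : IntervalIntegrable (fun _ : ℝ => y) volume 0 t := intervalIntegrable_const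
    have hdiff : matchingLoss (fun τ => (1 - 2*α*L*R) * σ τ + α * (τ + L*R)) t y
        - matchingLoss σ t y
        = ∫ τ in (0:ℝ)..t, (α * (τ + L*R) - 2*α*L*R * σ τ) := by
      unfold matchingLoss
      rw [← intervalIntegral.integral_sub (hσ'int.sub hy) (hσint.sub hy)]
      congr 1; ext τ; ring
    rw [hdiff]
    have hlin : Continuous (fun τ : ℝ => α * (τ + L*R)) :=
      continuous_const.mul (continuous_id.add continuous_const)
    have hid0 : IntervalIntegrable (fun x : ℝ => x) volume 0 t :=
      continuous_id.intervalIntegrable 0 t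
    have hidt : IntervalIntegrable (fun x : ℝ => x) volume t 0 :=
      continuous_id.intervalIntegrable t 0
    have hfint : IntervalIntegrable (fun τ => α * (τ + L*R) - 2*α*L*R * σ τ) volume 0 t :=
      (hlin.intervalIntegrable 0 t).sub (hσint.const_mul _)
    have hbd : ∀ τ ∈ Set.Icc (-(L*R)) (L*R),
        |α * (τ + L*R) - 2*α*L*R * σ τ| ≤ α * (L*R + |τ|) := by
      intro τ hτ
      obtain ⟨hs0, hs1⟩ := hσ_range τ hτ
      obtain ⟨hτ1, hτ2⟩ := hτ
      have h3 : 0 ≤ 2*α*L*R * σ τ := mul_nonneg (by positivity) hs0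
      have h4 : 2*α*L*R * σ τ ≤ 2*α*L*R :=
        mul_le_of_le_one_right (by positivity) hs1
      rw [abs_le]
      rcases abs_cases τ with ⟨h, hτ0⟩ | ⟨h, hτ0⟩ <;> rw [h] <;> constructor <;> nlinarith
    rcases le_total 0 t with h0t | ht0
    · have key : |∫ τ in (0:ℝ)..t, (α * (τ + L*R) - 2*α*L*R * σ τ)|
          ≤ ∫ τ in (0:ℝ)..t, α * (L*R + τ) := by
        refine (intervalIntegral.abs_integral_le_integral_abs h0t).trans ?_
        apply intervalIntegral.integral_mono_on h0t hfint.abs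
          ((continuous_const.mul (continuous_const.add continuous_id)).intervalIntegrable 0 t :
            IntervalIntegrable (fun τ : ℝ => α * (L*R + τ)) volume 0 t)
        intro τ hτ
        have hτm : τ ∈ Set.Icc (-(L*R)) (L*R) := ⟨by linarith [hτ.1], le_trans hτ.2 ht2⟩
        have := hbd τ hτm
        rwa [abs_of_nonneg hτ.1] at this
      have hval : (∫ τ in (0:ℝ)..t, α * (L*R + τ)) = α * (L*R*t + t^2/2) := by
        rw [intervalIntegral.integral_const_mul,
          intervalIntegral.integral_add intervalIntegrable_const
            hid0,
          intervalIntegral.integral_const, integral_id]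
        simp only [smul_eq_mul]
        ring
      rw [hval] at key
      refine key.trans ?_
      have hts : t^2 ≤ (L*R)^2 := sq_le_sq' (by linarith) ht2
      nlinarith [mul_le_mul_of_nonneg_left hts hα0.le,
        mul_le_mul_of_nonneg_left ht2 (mul_nonneg hα0.le hLR.le)]
    · have hsymm : (∫ τ in (0:ℝ)..t, (α * (τ + L*R) - 2*α*L*R * σ τ))
          = -∫ τ in t..(0:ℝ), (α * (τ + L*R) - 2*α*L*R * σ τ) :=
        intervalIntegral.integral_symm t 0
      have key : |∫ τ in (0:ℝ)..t, (α * (τ + L*R) - 2*α*L*R * σ τ)|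
          ≤ ∫ τ in t..(0:ℝ), α * (L*R - τ) := by
        rw [hsymm, abs_neg]
        refine (intervalIntegral.abs_integral_le_integral_abs ht0).trans ?_
        apply intervalIntegral.integral_mono_on ht0 hfint.symm.abs
          ((continuous_const.mul (continuous_const.sub continuous_id)).intervalIntegrable t 0 :
            IntervalIntegrable (fun τ : ℝ => α * (L*R - τ)) volume t 0)
        intro τ hτ
        have hτm : τ ∈ Set.Icc (-(L*R)) (L*R) := ⟨le_trans ht1 hτ.1, by linarith [hτ.2]⟩
        have := hbd τ hτm
        rw [abs_of_nonpos hτ.2] at this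
        simp only [Pi.mul_apply, Pi.sub_apply, id_eq]
        linarith [this]
      have hval : (∫ τ in t..(0:ℝ), α * (L*R - τ)) = α * (-(L*R*t) + t^2/2) := by
        rw [intervalIntegral.integral_const_mul,
          intervalIntegral.integral_sub intervalIntegrable_const
            hidt,
          intervalIntegral.integral_const, integral_id]
        simp only [smul_eq_mul]
        ring
      rw [hval] at key
      refine key.trans ?_
      have hts : t^2 ≤ (L*R)^2 := sq_le_sq' ht1 (by linarith)
      nlinarith [mul_le_mul_of_nonneg_left hts hα0.le,
        mul_le_mul_of_nonneg_left (show -t ≤ L*R by linarith) (mul_nonneg hα0.le hLR.le)]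
end

section
/- Let n ≥ 1, let z_1 ≤ z_2 ≤ … ≤ z_n be real numbers, let y_1, …, y_n ∈ [0,1], and let β > 0. Let (v_1, …, v_n) ∈ [0,1]^n be a minimizer of Σ_{i=1}^n (v_i − y_i)² subject to the constraints 0 ≤ v_{i+1} − v_i ≤ β(z_{i+1} − z_i) for all 1 ≤ i ≤ n−1. Let f : ℝ → ℝ be any function satisfying v_{i+1} − v_i ≤ β(f(v_{i+1}) − f(v_i)) for all 1 ≤ i ≤ n−1. Then Σ_{i=1}^n (v_i − y_i)(z_i − f(v_i)) ≥ 0. -/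
private lemma small_t (A B : ℝ) (hB : 0 ≤ B)
    (h : ∀ t : ℝ, 0 < t → t ≤ 1 → 0 ≤ A + t * B) : 0 ≤ A := by
  by_contra hA
  push_neg at hA
  set c : ℝ := -A / (2 * (B + 1)) with hc
  have hcpos : 0 < c := div_pos (by linarith) (by linarith)
  have hcmul : c * (2 * (B + 1)) = -A := div_mul_cancel₀ _ (by positivity)
  have ht := h (min 1 c) (lt_min one_pos hcpos) (min_le_left _ _)
  have htc : min 1 c ≤ c := min_le_right _ _
  have h2 : min 1 c * B ≤ c * B := mul_le_mul_of_nonneg_right htc hB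
  nlinarith [mul_nonneg hcpos.le hB]

private lemma clamp_sub (p q : ℝ) (h : p ≤ q) :
    0 ≤ max 0 (min q 1) - max 0 (min p 1) ∧
      max 0 (min q 1) - max 0 (min p 1) ≤ q - p := by
  rcases le_total p 1 with h1 | h1 <;> rcases le_total q 1 with h2 | h2 <;>
    rcases le_total p 0 with h3 | h3 <;> rcases le_total q 0 with h4 | h4 <;>
      constructor <;>
        simp [min_eq_left, min_eq_right, max_eq_left, max_eq_right, min_def, max_def] <;>
          split_ifs <;> linarith

private lemma clamp_close (x c : ℝ) (h0 : 0 ≤ c) (h1 : c ≤ 1) :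
    (max 0 (min x 1) - c) ^ 2 ≤ (x - c) ^ 2 := by
  rcases le_total x 0 with h | h
  · rw [min_eq_left (by linarith), max_eq_left (by linarith)]
    nlinarith
  rcases le_total x 1 with h' | h'
  · rw [min_eq_left h', max_eq_right h]
  · rw [min_eq_right h', max_eq_right (by linarith)]
    nlinarith

/-- KKT-based optimality characterization of bounded isotonic regression: if `v` minimizes
the squared distance to labels `y` over `[0,1]`-valued sequences whose increments lie in
`[0, β (z_{i+1} - z_i)]`, then the residuals positively correlate with `z_i - f(v_i)` for
any `f` satisfying `v_{i+1} - v_i ≤ β (f(v_{i+1}) - f(v_i))`. -/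
theorem bir_optimality
    (n : ℕ) (hn : 1 ≤ n) (z y : ℕ → ℝ) (β : ℝ) (hβ : 0 < β)
    (hz : ∀ i, i + 1 < n → z i ≤ z (i + 1))
    (hy : ∀ i < n, y i ∈ Set.Icc (0:ℝ) 1)
    (v : ℕ → ℝ)
    (hv_range : ∀ i < n, v i ∈ Set.Icc (0:ℝ) 1)
    (hv_constr : ∀ i, i + 1 < n →
      0 ≤ v (i + 1) - v i ∧ v (i + 1) - v i ≤ β * (z (i + 1) - z i))
    (hv_min : ∀ u : ℕ → ℝ,
      (∀ i < n, u i ∈ Set.Icc (0:ℝ) 1) →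
      (∀ i, i + 1 < n →
        0 ≤ u (i + 1) - u i ∧ u (i + 1) - u i ≤ β * (z (i + 1) - z i)) →
      ∑ i ∈ Finset.range n, (v i - y i)^2 ≤ ∑ i ∈ Finset.range n, (u i - y i)^2)
    (f : ℝ → ℝ)
    (hf : ∀ i, i + 1 < n → v (i + 1) - v i ≤ β * (f (v (i + 1)) - f (v i))) :
    0 ≤ ∑ i ∈ Finset.range n, (v i - y i) * (z i - f (v i)) := by
  classical
  -- Variational inequality: any direction `d` keeping increments feasible gives `0 ≤ ∑ r d`.
  have key : ∀ d : ℕ → ℝ,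
      (∀ i, i + 1 < n → 0 ≤ (v (i+1) + d (i+1)) - (v i + d i) ∧
        (v (i+1) + d (i+1)) - (v i + d i) ≤ β * (z (i+1) - z i)) →
      0 ≤ ∑ i ∈ Finset.range n, (v i - y i) * d i := by
    intro d hd
    have hA : 0 ≤ 2 * ∑ i ∈ Finset.range n, (v i - y i) * d i := by
      apply small_t _ (∑ i ∈ Finset.range n, (d i)^2)
        (Finset.sum_nonneg fun i _ => sq_nonneg _)
      intro t ht ht1
      set u : ℕ → ℝ := fun i => max 0 (min (v i + t * d i) 1) with hu
      have hbox : ∀ i < n, u i ∈ Set.Icc (0:ℝ) 1 :=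
        fun i _ => ⟨le_max_left _ _, max_le (by norm_num) (min_le_right _ _)⟩
      have hincr : ∀ i, i + 1 < n →
          0 ≤ u (i+1) - u i ∧ u (i+1) - u i ≤ β * (z (i+1) - z i) := by
        intro i hi
        obtain ⟨h1, h2⟩ := hv_constr i hi
        obtain ⟨h3, h4⟩ := hd i hi
        have hpq : (v i + t * d i) ≤ (v (i+1) + t * d (i+1)) := by nlinarith
        obtain ⟨c1, c2⟩ := clamp_sub _ _ hpq
        exact ⟨c1, c2.trans (by nlinarith)⟩
      have hmin := hv_min u hbox hincr
      have hclose : ∑ i ∈ Finset.range n, (u i - y i)^2 ≤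
          ∑ i ∈ Finset.range n, (v i + t * d i - y i)^2 :=
        Finset.sum_le_sum fun i hi =>
          clamp_close _ _ (hy i (Finset.mem_range.mp hi)).1 (hy i (Finset.mem_range.mp hi)).2
      have hexp : ∑ i ∈ Finset.range n, (v i + t * d i - y i)^2 =
          ∑ i ∈ Finset.range n, (v i - y i)^2
            + t * (2 * ∑ i ∈ Finset.range n, (v i - y i) * d i)
            + t^2 * ∑ i ∈ Finset.range n, (d i)^2 := by
        rw [Finset.mul_sum, Finset.mul_sum, Finset.mul_sum, ← Finset.sum_add_distrib,
          ← Finset.sum_add_distrib]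
        exact Finset.sum_congr rfl fun i _ => by ring
      rw [hexp] at hclose
      nlinarith [hmin.trans hclose]
    linarith
  -- The residuals sum to zero.
  have hsum0 : ∑ i ∈ Finset.range n, (v i - y i) = 0 := by
    have h1 := key (fun _ => 1)
      (fun i hi => ⟨by linarith [(hv_constr i hi).1], by linarith [(hv_constr i hi).2]⟩)
    have h2 := key (fun _ => -1)
      (fun i hi => ⟨by linarith [(hv_constr i hi).1], by linarith [(hv_constr i hi).2]⟩)
    simp only [mul_one, mul_neg_one] at h1 h2
    rw [Finset.sum_neg_distrib] at h2
    linarith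
  -- Shifting the tail `[k+1, n)` by `c` preserves feasibility when the step at `k` allows it.
  have shift : ∀ k : ℕ, k + 1 < n → ∀ c : ℝ,
      0 ≤ v (k+1) - v k + c → v (k+1) - v k + c ≤ β * (z (k+1) - z k) →
      0 ≤ c * ∑ i ∈ Finset.Ico (k+1) n, (v i - y i) := by
    intro k hk c hc1 hc2
    have hfeas := key (fun i => if k + 1 ≤ i then c else 0) ?feas
    case feas =>
      intro i hi
      by_cases hik : i = k
      · subst hik
        rw [if_pos (le_refl (i + 1)), if_neg (show ¬ (i + 1 ≤ i) by omega)]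
        exact ⟨by linarith, by linarith⟩
      · have e1 : (if k + 1 ≤ i + 1 then c else 0) = (if k + 1 ≤ i then c else 0) := by
          by_cases h : k + 1 ≤ i
          · rw [if_pos (by omega), if_pos h]
          · rw [if_neg (by omega), if_neg h]
        rw [e1]
        exact ⟨by linarith [(hv_constr i hi).1], by linarith [(hv_constr i hi).2]⟩
    have hsplit : ∑ i ∈ Finset.range n, (v i - y i) * (if k + 1 ≤ i then c else 0)
        = c * ∑ i ∈ Finset.Ico (k+1) n, (v i - y i) := by
      rw [Finset.range_eq_Ico,
        ← Finset.sum_Ico_consecutive _ (Nat.zero_le (k+1)) (by omega : k + 1 ≤ n)]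
      have e0 : ∑ i ∈ Finset.Ico 0 (k+1), (v i - y i) * (if k + 1 ≤ i then c else 0) = 0 :=
        Finset.sum_eq_zero fun i hi => by
          have hlt : ¬ (k + 1 ≤ i) := by
            have := (Finset.mem_Ico.mp hi).2; omega
          rw [if_neg hlt, mul_zero]
      rw [e0, zero_add,
        Finset.sum_congr rfl (fun i hi => by rw [if_pos (Finset.mem_Ico.mp hi).1]),
        ← Finset.sum_mul, mul_comm]
    rw [← hsplit]
    exact hfeas
  -- Abel summation.
  have habel : ∑ i ∈ Finset.range n, (v i - y i) * (z i - f (v i))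
      = ∑ k ∈ Finset.range n, ((z (k+1) - f (v (k+1))) - (z k - f (v k)))
          * ∑ i ∈ Finset.Ico (k+1) n, (v i - y i) := by
    have e1 : ∀ i : ℕ, (v i - y i) * (z i - f (v i))
        = (v i - y i) * (z 0 - f (v 0))
          + ∑ k ∈ Finset.range i, (v i - y i)
              * ((z (k+1) - f (v (k+1))) - (z k - f (v k))) := by
      intro i
      rw [← Finset.mul_sum, Finset.sum_range_sub (fun k => z k - f (v k))]
      ring
    rw [Finset.sum_congr rfl fun i _ => e1 i, Finset.sum_add_distrib, ← Finset.sum_mul,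
      hsum0, zero_mul, zero_add]
    rw [Finset.sum_comm' (s := Finset.range n) (t := fun i => Finset.range i)
      (t' := Finset.range n) (s' := fun k => Finset.Ico (k+1) n)
      (by intro i k; simp only [Finset.mem_range, Finset.mem_Ico]; omega)]
    exact Finset.sum_congr rfl fun k _ => by rw [← Finset.sum_mul, mul_comm]
  rw [habel]
  apply Finset.sum_nonneg
  intro k hk
  by_cases hkn : k + 1 < n
  · obtain ⟨ha0, hab⟩ := hv_constr k hkn
    have hac := hf k hkn
    have hup := shift k hkn (β * (z (k+1) - z k) - (v (k+1) - v k)) (by linarith) (by linarith)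
    have hdn := shift k hkn (-(v (k+1) - v k)) (by linarith) (by linarith)
    have key2 : 0 ≤ (β * (z (k+1) - z k) - β * (f (v (k+1)) - f (v k)))
        * ∑ i ∈ Finset.Ico (k+1) n, (v i - y i) := by
      rcases eq_or_lt_of_le ha0 with he | hlt
      · have hfe : f (v (k+1)) = f (v k) := by
          rw [show v (k+1) = v k by linarith]
        rw [hfe]
        have hz0 : (v (k+1) - v k) * ∑ i ∈ Finset.Ico (k+1) n, (v i - y i) = 0 := by
          rw [← he]
          ring
        nlinarith [hup, hz0]
      · have hTle : (∑ i ∈ Finset.Ico (k+1) n, (v i - y i)) ≤ 0 := by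
          by_contra h'
          push_neg at h'
          nlinarith [hdn, mul_pos hlt h']
        nlinarith [hup,
          mul_nonneg (show 0 ≤ β * (f (v (k+1)) - f (v k)) - (v (k+1) - v k) by linarith)
            (neg_nonneg.mpr hTle)]
    have hrw : ((z (k+1) - f (v (k+1))) - (z k - f (v k)))
        * ∑ i ∈ Finset.Ico (k+1) n, (v i - y i)
        = ((β * (z (k+1) - z k) - β * (f (v (k+1)) - f (v k)))
            * ∑ i ∈ Finset.Ico (k+1) n, (v i - y i)) / β := by
      field_simp
      ring
    rw [hrw]
    exact div_nonneg key2 hβ.le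
  · have hico : Finset.Ico (k+1) n = ∅ := Finset.Ico_eq_empty (by omega)
    rw [hico, Finset.sum_empty, mul_zero]
end

section
/- Let d ∈ ℕ, L, R, β > 0, and let D be a probability distribution on X × {0,1} with X ⊆ B(L) ⊆ ℝ^d. Fix w ∈ B(R), and let σ : [−LR, LR] → [0,1] be a minimizer, over all non-decreasing β-Lipschitz functions from [−LR, LR] to [0,1], of E_{(x,y)∼D}[(σ(w·x) − y)²]. Then for every non-decreasing function g : [0,1] → [−LR, LR] satisfying v′ − v ≤ β(g(v′) − g(v)) for all 0 ≤ v ≤ v′ ≤ 1, it holds that E_{(x,y)∼D}[(σ(w·x) − y)(w·x − g(σ(w·x)))] ≥ 0. -/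
open MeasureTheory Set Filter

/-! ### clamp helpers -/

noncomputable def clamp01 (x : ℝ) : ℝ := max 0 (min 1 x)

lemma clamp01_mem (x : ℝ) : clamp01 x ∈ Set.Icc (0:ℝ) 1 :=
  ⟨le_max_left _ _, max_le zero_le_one (min_le_left _ _)⟩

lemma clamp01_of_mem {x : ℝ} (h : x ∈ Set.Icc (0:ℝ) 1) : clamp01 x = x := by
  rw [clamp01, min_eq_right h.2, max_eq_right h.1]

lemma clamp01_mono : Monotone clamp01 := fun a b hab =>
  max_le_max le_rfl (min_le_min le_rfl hab)

lemma clamp01_sub_le {a b : ℝ} (h : a ≤ b) : clamp01 b - clamp01 a ≤ b - a := by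
  have h1 : min 1 b ≤ min 1 a + (b - a) := by
    rcases le_total (1:ℝ) a with h' | h'
    · rw [min_eq_left h']
      exact le_trans (min_le_left _ _) (by linarith)
    · rw [min_eq_right h']
      exact le_trans (min_le_right _ _) (by linarith)
  have h2 : clamp01 b ≤ clamp01 a + (b - a) := by
    rw [clamp01, clamp01]
    refine max_le ?_ ?_
    · have := le_max_left (0:ℝ) (min 1 a); linarith
    · have := le_max_right (0:ℝ) (min 1 a); linarith
  linarith

lemma abs_clamp01_sub_le (a b : ℝ) : |clamp01 a - clamp01 b| ≤ |a - b| := by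
  rcases le_total a b with h | h
  · rw [abs_sub_comm a b, abs_sub_comm,
      abs_of_nonneg (by have := clamp01_mono h; linarith), abs_of_nonneg (by linarith)]
    exact clamp01_sub_le h
  · rw [abs_of_nonneg (by have := clamp01_mono h; linarith), abs_of_nonneg (by linarith)]
    exact clamp01_sub_le h

lemma clamp01_shift_abs {u : ℝ} (p : ℝ) (hu : u ∈ Set.Icc (0:ℝ) 1) :
    |clamp01 p - u| ≤ |p - u| := by
  calc |clamp01 p - u| = |clamp01 p - clamp01 u| := by rw [clamp01_of_mem hu]
    _ ≤ |p - u| := abs_clamp01_sub_le p u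

/-! ### tents -/

/-- a piecewise-linear "tent" through `(qi, c)` with slope `s₂` below `qi` and `s₁` above. -/
def tent (s₁ s₂ c qi v : ℝ) : ℝ := c + min ((v - qi) * s₁) ((v - qi) * s₂)

lemma tent_anchor (s₁ s₂ c qi : ℝ) : tent s₁ s₂ c qi qi = c := by simp [tent]

lemma tent_above {s₁ s₂ : ℝ} (h : s₁ ≤ s₂) {qi v : ℝ} (hv : qi ≤ v) (c : ℝ) :
    tent s₁ s₂ c qi v = c + (v - qi) * s₁ := by
  have : (v - qi) * s₁ ≤ (v - qi) * s₂ := mul_le_mul_of_nonneg_left h (by linarith)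
  rw [tent, min_eq_left this]

lemma tent_below {s₁ s₂ : ℝ} (h : s₁ ≤ s₂) {qi v : ℝ} (hv : v ≤ qi) (c : ℝ) :
    tent s₁ s₂ c qi v = c + (v - qi) * s₂ := by
  have : (v - qi) * s₂ ≤ (v - qi) * s₁ := by nlinarith
  rw [tent, min_eq_right this]

lemma tent_incr_low {s₁ s₂ : ℝ} (hs : s₁ ≤ s₂) {v v' : ℝ} (h : v ≤ v') (c qi : ℝ) :
    tent s₁ s₂ c qi v + (v' - v) * s₁ ≤ tent s₁ s₂ c qi v' := by
  have key : min ((v - qi) * s₁) ((v - qi) * s₂) + (v' - v) * s₁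
      ≤ min ((v' - qi) * s₁) ((v' - qi) * s₂) := by
    refine le_min ?_ ?_
    · have := min_le_left ((v - qi) * s₁) ((v - qi) * s₂); nlinarith
    · have : (v' - v) * s₁ ≤ (v' - v) * s₂ := mul_le_mul_of_nonneg_left hs (by linarith)
      have := min_le_right ((v - qi) * s₁) ((v - qi) * s₂); nlinarith
  unfold tent; linarith

lemma tent_incr_up {s₁ s₂ : ℝ} (hs : s₁ ≤ s₂) {v v' : ℝ} (h : v ≤ v') (c qi : ℝ) :
    tent s₁ s₂ c qi v' ≤ tent s₁ s₂ c qi v + (v' - v) * s₂ := by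
  unfold tent
  rcases le_total ((v - qi) * s₁) ((v - qi) * s₂) with h2 | h2
  · rw [min_eq_left h2]
    have : (v' - qi) * s₁ ≤ (v' - v) * s₂ + (v - qi) * s₁ := by nlinarith
    have := min_le_left ((v' - qi) * s₁) ((v' - qi) * s₂)
    linarith
  · rw [min_eq_right h2]
    have e2 : (v' - qi) * s₂ = (v - qi) * s₂ + (v' - v) * s₂ := by ring
    have := min_le_right ((v' - qi) * s₁) ((v' - qi) * s₂)
    linarith

section P2
variable {β B : ℝ} {g : ℝ → ℝ} {q : ℕ → ℝ}


/-! ### the approximating sequence -/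

noncomputable def dgap (q : ℕ → ℝ) (i : ℕ) : ℝ :=
  (Finset.range (i+1)).inf' ⟨i, Finset.self_mem_range_succ i⟩
    (fun j => if q j < q i then q i - q j else 1)

noncomputable def ugap (q : ℕ → ℝ) (j : ℕ) : ℝ :=
  (Finset.range (j+1)).inf' ⟨j, Finset.self_mem_range_succ j⟩
    (fun i => if q j < q i then q i - q j else 1)

noncomputable def slp (β B : ℝ) (q : ℕ → ℝ) (i n : ℕ) : ℝ :=
  β⁻¹ + (4*B+1) * (1 / dgap q i + (n+1))

noncomputable def gapp (β B : ℝ) (g : ℝ → ℝ) (q : ℕ → ℝ) (n : ℕ) (v : ℝ) : ℝ :=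
  (Finset.range (n+1)).sup' ⟨0, by simp⟩ (fun i => tent β⁻¹ (slp β B q i n) (g (q i)) (q i) v)

noncomputable def slpmax (β B : ℝ) (q : ℕ → ℝ) (n : ℕ) : ℝ :=
  (Finset.range (n+1)).sup' ⟨0, by simp⟩ (fun i => slp β B q i n)

noncomputable def eta (B : ℝ) (n : ℕ) : ℝ := 2*B / ((4*B+1)*(n+1))

lemma dgap_pos (q : ℕ → ℝ) (i : ℕ) : 0 < dgap q i := by
  rw [dgap]
  refine (Finset.lt_inf'_iff _).2 ?_
  intro j _
  split_ifs with h
  · linarith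
  · norm_num

lemma dgap_le {j i : ℕ} (hj : j ≤ i) (hlt : q j < q i) : dgap q i ≤ q i - q j := by
  have h := Finset.inf'_le (s := Finset.range (i+1))
    (fun j => if q j < q i then q i - q j else 1) (Finset.mem_range_succ_iff.2 hj)
  rw [if_pos hlt] at h
  rw [dgap]; exact h

lemma ugap_pos (q : ℕ → ℝ) (j : ℕ) : 0 < ugap q j := by
  rw [ugap]
  refine (Finset.lt_inf'_iff _).2 ?_
  intro i _
  split_ifs with h
  · linarith
  · norm_num

lemma ugap_le {i j : ℕ} (hi : i ≤ j) (hlt : q j < q i) : ugap q j ≤ q i - q j := by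
  have h := Finset.inf'_le (s := Finset.range (j+1))
    (fun i => if q j < q i then q i - q j else 1) (Finset.mem_range_succ_iff.2 hi)
  rw [if_pos hlt] at h
  rw [ugap]; exact h

lemma inv_le_slp (hβ : 0 < β) (hB : 0 < B) (i n : ℕ) : β⁻¹ ≤ slp β B q i n := by
  have h1 := dgap_pos q i
  have h2 : (0:ℝ) ≤ 1 / dgap q i := by positivity
  have : (0:ℝ) ≤ (4*B+1) * (1 / dgap q i + (n+1)) := by positivity
  unfold slp; linarith

lemma slp_ge_n (hβ : 0 < β) (hB : 0 < B) (i n : ℕ) : (4*B+1) * (n+1) ≤ slp β B q i n := by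
  have h1 := dgap_pos q i
  have h2 : (0:ℝ) ≤ 1 / dgap q i := by positivity
  have h3 : (0:ℝ) ≤ β⁻¹ := by positivity
  have : (4*B+1) * (n+1) ≤ (4*B+1) * (1 / dgap q i + (n+1)) := by nlinarith
  unfold slp; linarith

lemma slp_mul_dgap (hβ : 0 < β) (hB : 0 < B) (i n : ℕ) :
    4*B+1 ≤ slp β B q i n * dgap q i := by
  have h1 := dgap_pos q i
  have h3 : (0:ℝ) ≤ β⁻¹ := by positivity
  have key : (4*B+1) * (1 / dgap q i) * dgap q i = 4*B+1 := by
    field_simp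
  have h4 : (0:ℝ) ≤ (4*B+1) * (n+1) := by positivity
  have : (β⁻¹ + (4*B+1) * (n+1)) * dgap q i ≥ 0 := by positivity
  unfold slp
  nlinarith

section Gapp
variable {β B : ℝ} {g : ℝ → ℝ} {q : ℕ → ℝ}


lemma le_gapp {n i : ℕ} (hi : i ≤ n) (v : ℝ) :
    tent β⁻¹ (slp β B q i n) (g (q i)) (q i) v ≤ gapp β B g q n v := by
  rw [gapp]
  exact Finset.le_sup' (fun i => tent β⁻¹ (slp β B q i n) (g (q i)) (q i) v)
    (Finset.mem_range_succ_iff.2 hi)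

lemma slpmax_pos (hβ : 0 < β) (hB : 0 < B) (n : ℕ) : 0 < slpmax β B q n := by
  have h1 : β⁻¹ ≤ slp β B q 0 n := inv_le_slp hβ hB 0 n
  have h2 : slp β B q 0 n ≤ slpmax β B q n :=
    Finset.le_sup' (fun i => slp β B q i n) (by simp : (0:ℕ) ∈ Finset.range (n+1))
  have : (0:ℝ) < β⁻¹ := by positivity
  linarith

lemma gapp_incr_low (hβ : 0 < β) (hB : 0 < B) {v v' : ℝ} (h : v ≤ v') (n : ℕ) :
    gapp β B g q n v + (v' - v) * β⁻¹ ≤ gapp β B g q n v' := by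
  obtain ⟨i, hi, hval⟩ := Finset.exists_mem_eq_sup' (⟨0, by simp⟩ : (Finset.range (n+1)).Nonempty)
    (fun i => tent β⁻¹ (slp β B q i n) (g (q i)) (q i) v)
  have hval2 : gapp β B g q n v = tent β⁻¹ (slp β B q i n) (g (q i)) (q i) v := by
    rw [gapp]; exact hval
  rw [hval2]
  calc tent β⁻¹ (slp β B q i n) (g (q i)) (q i) v + (v' - v) * β⁻¹
      ≤ tent β⁻¹ (slp β B q i n) (g (q i)) (q i) v' :=
        tent_incr_low (inv_le_slp hβ hB i n) h _ _
    _ ≤ _ := le_gapp (Finset.mem_range_succ_iff.1 hi) v'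

lemma gapp_incr_up (hβ : 0 < β) (hB : 0 < B) {v v' : ℝ} (h : v ≤ v') (n : ℕ) :
    gapp β B g q n v' ≤ gapp β B g q n v + slpmax β B q n * (v' - v) := by
  obtain ⟨i, hi, hval⟩ := Finset.exists_mem_eq_sup' (⟨0, by simp⟩ : (Finset.range (n+1)).Nonempty)
    (fun i => tent β⁻¹ (slp β B q i n) (g (q i)) (q i) v')
  have hval2 : gapp β B g q n v' = tent β⁻¹ (slp β B q i n) (g (q i)) (q i) v' := by
    rw [gapp]; exact hval
  rw [hval2]
  have h1 : tent β⁻¹ (slp β B q i n) (g (q i)) (q i) v'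
      ≤ tent β⁻¹ (slp β B q i n) (g (q i)) (q i) v + (v' - v) * slp β B q i n :=
    tent_incr_up (inv_le_slp hβ hB i n) h _ _
  have h2 : tent β⁻¹ (slp β B q i n) (g (q i)) (q i) v ≤ gapp β B g q n v :=
    le_gapp (Finset.mem_range_succ_iff.1 hi) v
  have h3 : slp β B q i n ≤ slpmax β B q n := Finset.le_sup' (fun i => slp β B q i n) hi
  have h4 : (v' - v) * slp β B q i n ≤ (v' - v) * slpmax β B q n :=
    mul_le_mul_of_nonneg_left h3 (by linarith)
  calc tent β⁻¹ (slp β B q i n) (g (q i)) (q i) v'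
      ≤ gapp β B g q n v + (v' - v) * slp β B q i n := by linarith
    _ ≤ _ := by nlinarith

lemma tent_le_val (hβ : 0 < β) (hB : 0 < B)
    (hganti : ∀ u ∈ Set.Icc (0:ℝ) 1, ∀ v ∈ Set.Icc (0:ℝ) 1, u ≤ v → v - u ≤ β * (g v - g u))
    (hq : ∀ i, q i ∈ Set.Icc (0:ℝ) 1) {i n : ℕ} {v : ℝ} (hv : v ∈ Set.Icc (0:ℝ) 1)
    (hqi : q i ≤ v) : tent β⁻¹ (slp β B q i n) (g (q i)) (q i) v ≤ g v := by
  rw [tent_above (inv_le_slp hβ hB i n) hqi]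
  have ha := hganti (q i) (hq i) v hv hqi
  have h2 := mul_le_mul_of_nonneg_right ha (le_of_lt (inv_pos.2 hβ))
  have h3 : β * (g v - g (q i)) * β⁻¹ = g v - g (q i) := by field_simp
  rw [h3] at h2
  linarith

lemma gapp_le_B (hβ : 0 < β) (hB : 0 < B)
    (hganti : ∀ u ∈ Set.Icc (0:ℝ) 1, ∀ v ∈ Set.Icc (0:ℝ) 1, u ≤ v → v - u ≤ β * (g v - g u))
    (hgb : ∀ v ∈ Set.Icc (0:ℝ) 1, |g v| ≤ B)
    (hq : ∀ i, q i ∈ Set.Icc (0:ℝ) 1) {n : ℕ} {v : ℝ} (hv : v ∈ Set.Icc (0:ℝ) 1) :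
    gapp β B g q n v ≤ B := by
  rw [gapp]
  refine Finset.sup'_le _ _ fun i _ => ?_
  rcases le_or_gt (q i) v with hle | hgt
  · exact le_trans (tent_le_val hβ hB hganti hq hv hle) (abs_le.1 (hgb v hv)).2
  · rw [tent_below (inv_le_slp hβ hB i n) hgt.le]
    have hs : 0 < slp β B q i n := lt_of_lt_of_le (by positivity) (inv_le_slp hβ hB i n)
    have : (v - q i) * slp β B q i n ≤ 0 := mul_nonpos_of_nonpos_of_nonneg (by linarith) hs.le
    have := (abs_le.1 (hgb (q i) (hq i))).2
    linarith

lemma gapp_ge_negB (hβ : 0 < β) (hB : 0 < B)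
    (hgb : ∀ v ∈ Set.Icc (0:ℝ) 1, |g v| ≤ B)
    (hq0 : q 0 = 0) {n : ℕ} {v : ℝ} (hv : v ∈ Set.Icc (0:ℝ) 1) :
    -B ≤ gapp β B g q n v := by
  have h0 : q 0 ≤ v := by rw [hq0]; exact hv.1
  have hle : tent β⁻¹ (slp β B q 0 n) (g (q 0)) (q 0) v ≤ gapp β B g q n v :=
    le_gapp (Nat.zero_le n) v
  rw [tent_above (inv_le_slp hβ hB 0 n) h0] at hle
  have hb : |g (q 0)| ≤ B := by
    rw [hq0]; exact hgb 0 ⟨le_rfl, zero_le_one⟩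
  have : (0:ℝ) ≤ (v - q 0) * β⁻¹ := by
    have : (0:ℝ) ≤ β⁻¹ := by positivity
    nlinarith
  linarith [(abs_le.1 hb).1]

lemma gbar_mono (hβ : 0 < β)
    (hganti : ∀ u ∈ Set.Icc (0:ℝ) 1, ∀ v ∈ Set.Icc (0:ℝ) 1, u ≤ v → v - u ≤ β * (g v - g u)) :
    Monotone (fun x => g (clamp01 x)) := by
  intro a b hab
  have hc := clamp01_mono hab
  have h := hganti _ (clamp01_mem a) _ (clamp01_mem b) hc
  simp only
  nlinarith

lemma eta_pos (hB : 0 < B) (n : ℕ) : 0 < eta B n := by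
  unfold eta; positivity

lemma eta_tendsto (hB : 0 < B) : Filter.Tendsto (eta B) Filter.atTop (nhds 0) := by
  have h1 : Filter.Tendsto (fun n : ℕ => (4*B+1) * ((n:ℝ)+1)) Filter.atTop Filter.atTop := by
    apply Filter.Tendsto.const_mul_atTop (by positivity)
    exact Filter.tendsto_atTop_add_const_right _ 1 tendsto_natCast_atTop_atTop
  exact Filter.Tendsto.div_atTop tendsto_const_nhds h1

lemma gapp_le_shift (hβ : 0 < β) (hB : 0 < B)
    (hganti : ∀ u ∈ Set.Icc (0:ℝ) 1, ∀ v ∈ Set.Icc (0:ℝ) 1, u ≤ v → v - u ≤ β * (g v - g u))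
    (hgb : ∀ v ∈ Set.Icc (0:ℝ) 1, |g v| ≤ B)
    (hq : ∀ i, q i ∈ Set.Icc (0:ℝ) 1) {n : ℕ} {v : ℝ} (hv : v ∈ Set.Icc (0:ℝ) 1) :
    gapp β B g q n v ≤ g (clamp01 (v + eta B n)) := by
  have heta := eta_pos hB n
  rw [gapp]
  refine Finset.sup'_le _ _ fun i _ => ?_
  rcases le_or_gt (q i) v with hle | hgt
  · refine le_trans (tent_le_val hβ hB hganti hq hv hle) ?_
    have : g v = g (clamp01 v) := by rw [clamp01_of_mem hv]
    rw [this]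
    exact gbar_mono hβ hganti (by linarith)
  · rw [tent_below (inv_le_slp hβ hB i n) hgt.le]
    rcases le_or_gt (2*B) ((q i - v) * slp β B q i n) with hbig | hsmall
    · have hb1 := (abs_le.1 (hgb (q i) (hq i))).2
      have hb2 := (abs_le.1 (hgb (clamp01 (v + eta B n)) (clamp01_mem _))).1
      have : (v - q i) * slp β B q i n = -((q i - v) * slp β B q i n) := by ring
      linarith
    · have hM : (0:ℝ) < (4*B+1)*((n:ℝ)+1) := by positivity
      have h1 : (q i - v) * ((4*B+1)*((n:ℝ)+1)) ≤ (q i - v) * slp β B q i n :=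
        mul_le_mul_of_nonneg_left (slp_ge_n hβ hB i n) (by linarith)
      have h2 : q i - v < eta B n := by
        rw [eta, lt_div_iff₀ hM]
        calc (q i - v) * ((4*B+1)*((n:ℝ)+1)) ≤ (q i - v) * slp β B q i n := h1
          _ < 2*B := hsmall
      have hs : 0 < slp β B q i n := lt_of_lt_of_le (by positivity) (inv_le_slp hβ hB i n)
      have h3 : (v - q i) * slp β B q i n ≤ 0 := mul_nonpos_of_nonpos_of_nonneg (by linarith) hs.le
      have h4 : g (q i) = g (clamp01 (q i)) := by rw [clamp01_of_mem (hq i)]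
      have h5 : g (clamp01 (q i)) ≤ g (clamp01 (v + eta B n)) := gbar_mono hβ hganti (by linarith)
      linarith

lemma gapp_anchor_ge {n j : ℕ} (hj : j ≤ n) : g (q j) ≤ gapp β B g q n (q j) := by
  have := le_gapp (β := β) (B := B) (g := g) (q := q) hj (q j)
  rwa [tent_anchor] at this

lemma gapp_ge_tent (hβ : 0 < β) (hB : 0 < B) {n j : ℕ} (hj : j ≤ n) {v : ℝ} (hqj : q j ≤ v) :
    g (q j) ≤ gapp β B g q n v := by
  have h := le_gapp (β := β) (B := B) (g := g) (q := q) hj v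
  rw [tent_above (inv_le_slp hβ hB j n) hqj] at h
  have : (0:ℝ) ≤ (v - q j) * β⁻¹ := by
    have : (0:ℝ) ≤ β⁻¹ := by positivity
    nlinarith
  linarith

lemma gapp_anchor_le (hβ : 0 < β) (hB : 0 < B)
    (hganti : ∀ u ∈ Set.Icc (0:ℝ) 1, ∀ v ∈ Set.Icc (0:ℝ) 1, u ≤ v → v - u ≤ β * (g v - g u))
    (hgb : ∀ v ∈ Set.Icc (0:ℝ) 1, |g v| ≤ B)
    (hq : ∀ i, q i ∈ Set.Icc (0:ℝ) 1) (j : ℕ) :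
    ∃ N : ℕ, ∀ n ≥ N, gapp β B g q n (q j) ≤ g (q j) := by
  set γ := ugap q j with hγdef
  have hγ : 0 < γ := ugap_pos q j
  obtain ⟨N, hN⟩ := exists_nat_ge (2*B / ((4*B+1)*γ))
  have hNγ : 2*B ≤ (4*B+1)*((N:ℝ)+1)*γ := by
    have hpos : (0:ℝ) < (4*B+1)*γ := by positivity
    rw [div_le_iff₀ hpos] at hN
    nlinarith
  refine ⟨N, fun n hn => ?_⟩
  rw [gapp]
  refine Finset.sup'_le _ _ fun i hi => ?_
  rcases le_or_gt (q i) (q j) with hle | hgt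
  · exact tent_le_val hβ hB hganti hq (hq j) hle
  · rw [tent_below (inv_le_slp hβ hB i n) hgt.le]
    have hb1 := (abs_le.1 (hgb (q i) (hq i))).2
    have hb2 := (abs_le.1 (hgb (q j) (hq j))).1
    have key : 2*B ≤ (q i - q j) * slp β B q i n := by
      rcases le_or_gt i j with hij | hji
      · have h1 : γ ≤ q i - q j := ugap_le hij hgt
        have h2 : (4*B+1)*((n:ℝ)+1) ≤ slp β B q i n := slp_ge_n hβ hB i n
        have h3 : ((N:ℝ)+1) ≤ ((n:ℝ)+1) := by
          have : (N:ℝ) ≤ (n:ℝ) := Nat.cast_le.2 hn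
          linarith
        have hs0 : (0:ℝ) ≤ slp β B q i n := le_trans (by positivity) (inv_le_slp hβ hB i n)
        have hmul := mul_le_mul h2 h1 hγ.le hs0
        have h4 : (4*B+1)*((N:ℝ)+1)*γ ≤ (4*B+1)*((n:ℝ)+1)*γ := by nlinarith
        nlinarith
      · have h1 : dgap q i ≤ q i - q j := dgap_le hji.le hgt
        have h2 : 4*B+1 ≤ slp β B q i n * dgap q i := slp_mul_dgap hβ hB i n
        have hs : 0 < slp β B q i n := lt_of_lt_of_le (by positivity) (inv_le_slp hβ hB i n)
        nlinarith
    nlinarith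

lemma gapp_tendsto (hβ : 0 < β) (hB : 0 < B)
    (hganti : ∀ u ∈ Set.Icc (0:ℝ) 1, ∀ v ∈ Set.Icc (0:ℝ) 1, u ≤ v → v - u ≤ β * (g v - g u))
    (hgb : ∀ v ∈ Set.Icc (0:ℝ) 1, |g v| ≤ B)
    (hq : ∀ i, q i ∈ Set.Icc (0:ℝ) 1) (hq0 : q 0 = 0)
    (hdense : ∀ a b : ℝ, 0 ≤ a → a < b → b ≤ 1 → ∃ j, a < q j ∧ q j ≤ b)
    {v : ℝ} (hv : v ∈ Set.Icc (0:ℝ) 1)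
    (hcont : (∃ j, q j = v) ∨ ContinuousAt (fun x => g (clamp01 x)) v) :
    Filter.Tendsto (fun n => gapp β B g q n v) Filter.atTop (nhds (g v)) := by
  by_cases hanch : ∃ j, q j = v
  · obtain ⟨j, rfl⟩ := hanch
    obtain ⟨N, hN⟩ := gapp_anchor_le hβ hB hganti hgb hq j
    refine Filter.Tendsto.congr' ?_ tendsto_const_nhds
    filter_upwards [Filter.eventually_ge_atTop (max j N)] with n hn
    exact le_antisymm (gapp_anchor_ge (le_trans (le_max_left _ _) hn))
      (hN n (le_trans (le_max_right _ _) hn))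
  · have hc : ContinuousAt (fun x => g (clamp01 x)) v := hcont.resolve_left hanch
    have hv0 : 0 < v := by
      rcases eq_or_lt_of_le hv.1 with h | h
      · exact absurd ⟨0, by rw [hq0, ← h]⟩ hanch
      · exact h
    have hgbv : g (clamp01 v) = g v := by rw [clamp01_of_mem hv]
    refine tendsto_order.2 ⟨fun b hb => ?_, fun b hb => ?_⟩
    · -- eventually b < gapp n v
      obtain ⟨δ, hδ, hδc⟩ := Metric.continuousAt_iff.1 hc (g v - b) (by linarith)
      set a := max 0 (v - δ/2) with ha
      have hav : a < v := by
        apply max_lt hv0; linarith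
      obtain ⟨j, haj, hjv⟩ := hdense a v (le_max_left _ _) hav hv.2
      have hqjd : dist (q j) v < δ := by
        rw [Real.dist_eq, abs_of_nonpos (by linarith)]
        have : v - δ/2 ≤ a := le_max_right _ _
        linarith
      have := hδc hqjd
      rw [Real.dist_eq, hgbv] at this
      have hgqj : g (clamp01 (q j)) = g (q j) := by rw [clamp01_of_mem (hq j)]
      rw [hgqj] at this
      have hbq : b < g (q j) := by
        have := abs_lt.1 this
        linarith
      filter_upwards [Filter.eventually_ge_atTop j] with n hn
      exact lt_of_lt_of_le hbq (gapp_ge_tent hβ hB hn hjv)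
    · -- eventually gapp n v < b
      have hten : Filter.Tendsto (fun n => g (clamp01 (v + eta B n))) Filter.atTop
          (nhds (g v)) := by
        rw [← hgbv]
        refine (hc.tendsto).comp ?_
        have : Filter.Tendsto (fun n => v + eta B n) Filter.atTop (nhds (v + 0)) :=
          tendsto_const_nhds.add (eta_tendsto hB)
        simpa using this
      have hev : ∀ᶠ n in Filter.atTop, g (clamp01 (v + eta B n)) < b :=
        hten.eventually_lt_const hb
      filter_upwards [hev] with n hn
      exact lt_of_le_of_lt (gapp_le_shift hβ hB hganti hgb hq hv) hn

end Gapp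

section Pack
variable {β B : ℝ} {g : ℝ → ℝ} {q : ℕ → ℝ}

lemma gapp_lipschitz (hβ : 0 < β) (hB : 0 < B) (n : ℕ) {v v' : ℝ} (h : v ≤ v') :
    |gapp β B g q n v' - gapp β B g q n v| ≤ slpmax β B q n * (v' - v) := by
  have h1 := gapp_incr_low (g := g) (q := q) hβ hB h n
  have h2 := gapp_incr_up (g := g) (q := q) hβ hB h n
  have h3 : (0:ℝ) ≤ (v' - v) * β⁻¹ := mul_nonneg (by linarith) (by positivity)
  rw [abs_of_nonneg (by linarith)]
  linarith

lemma gapp_continuous (hβ : 0 < β) (hB : 0 < B) (n : ℕ) :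
    Continuous (gapp β B g q n) := by
  have hK : 0 ≤ slpmax β B q n := (slpmax_pos (q := q) hβ hB n).le
  have : LipschitzWith (Real.toNNReal (slpmax β B q n)) (gapp β B g q n) := by
    refine LipschitzWith.of_dist_le_mul fun a b => ?_
    rw [Real.dist_eq, Real.dist_eq, Real.coe_toNNReal _ hK]
    rcases le_total a b with hab | hab
    · have e : |a - b| = b - a := by
        rw [abs_sub_comm, abs_of_nonneg (sub_nonneg.2 hab)]
      rw [e]
      calc |gapp β B g q n a - gapp β B g q n b|
          = |gapp β B g q n b - gapp β B g q n a| := abs_sub_comm _ _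
        _ ≤ slpmax β B q n * (b - a) := gapp_lipschitz hβ hB n hab
    · have e : |a - b| = a - b := abs_of_nonneg (sub_nonneg.2 hab)
      rw [e]
      exact gapp_lipschitz hβ hB n hab
  exact this.continuous

lemma exists_approx (β B : ℝ) (g : ℝ → ℝ) (hβ : 0 < β) (hB : 0 < B)
    (hganti : ∀ u ∈ Set.Icc (0:ℝ) 1, ∀ v ∈ Set.Icc (0:ℝ) 1, u ≤ v → v - u ≤ β * (g v - g u))
    (hgb : ∀ v ∈ Set.Icc (0:ℝ) 1, |g v| ≤ B) :
    ∃ G : ℕ → ℝ → ℝ,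
      (∀ n, Continuous (G n)) ∧
      (∀ n, ∃ K : ℝ, 0 < K ∧ ∀ v v' : ℝ, v ≤ v' → G n v' - G n v ≤ K * (v' - v)) ∧
      (∀ n, ∀ v v' : ℝ, v ≤ v' → v' - v ≤ β * (G n v' - G n v)) ∧
      (∀ n, ∀ v ∈ Set.Icc (0:ℝ) 1, |G n v| ≤ B) ∧
      (∀ v ∈ Set.Icc (0:ℝ) 1,
        Filter.Tendsto (fun n => G n v) Filter.atTop (nhds (g v))) := by
  classical
  set gb : ℝ → ℝ := fun x => g (clamp01 x) with hgbdef
  have hmono : Monotone gb := gbar_mono hβ hganti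
  set T : Set ℝ := ({x | ¬ContinuousAt gb x} ∩ Set.Icc 0 1) ∪
      (Set.range ((↑) : ℚ → ℝ) ∩ Set.Icc 0 1) ∪ {0} with hTdef
  have hTc : T.Countable := by
    refine (Set.Countable.union ?_ (Set.countable_singleton 0))
    refine Set.Countable.union ?_ ?_
    · exact (hmono.countable_not_continuousAt).mono Set.inter_subset_left
    · exact (Set.countable_range _).mono Set.inter_subset_left
  have hT0 : (0:ℝ) ∈ T := Or.inr rfl
  have hTsub : T ⊆ Set.Icc (0:ℝ) 1 := by
    rintro x ((⟨-, hx⟩ | ⟨-, hx⟩) | hx)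
    · exact hx
    · exact hx
    · simp only [Set.mem_singleton_iff] at hx
      subst hx; exact ⟨le_rfl, zero_le_one⟩
  obtain ⟨f, hf⟩ := hTc.exists_eq_range ⟨0, hT0⟩
  set q : ℕ → ℝ := fun i => Nat.casesOn i (0:ℝ) f with hqdef
  have hq0 : q 0 = 0 := rfl
  have hq : ∀ i, q i ∈ Set.Icc (0:ℝ) 1 := by
    intro i
    cases i with
    | zero => exact ⟨le_rfl, zero_le_one⟩
    | succ k =>
      apply hTsub
      rw [hf]
      exact ⟨k, rfl⟩
  have hdense : ∀ a b : ℝ, 0 ≤ a → a < b → b ≤ 1 → ∃ j, a < q j ∧ q j ≤ b := by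
    intro a b ha hab hb1
    obtain ⟨r, har, hrb⟩ := exists_rat_btwn hab
    have hrT : (r:ℝ) ∈ T := Or.inl (Or.inr ⟨⟨r, rfl⟩, by constructor <;> linarith⟩)
    rw [hf] at hrT
    obtain ⟨k, hk⟩ := hrT
    exact ⟨k + 1, by rw [hqdef]; simp only [← hk]; constructor <;> linarith⟩
  have hcont : ∀ v ∈ Set.Icc (0:ℝ) 1, (∃ j, q j = v) ∨ ContinuousAt gb v := by
    intro v hv
    by_cases h : ContinuousAt gb v
    · exact Or.inr h
    · left
      have hvT : v ∈ T := Or.inl (Or.inl ⟨h, hv⟩)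
      rw [hf] at hvT
      obtain ⟨k, hk⟩ := hvT
      exact ⟨k + 1, hk⟩
  refine ⟨gapp β B g q, fun n => gapp_continuous hβ hB n, fun n => ?_, ?_, ?_, ?_⟩
  · refine ⟨slpmax β B q n, slpmax_pos hβ hB n, fun v v' hvv => ?_⟩
    have h1 := gapp_incr_low (g := g) (q := q) hβ hB hvv n
    have h2 := gapp_incr_up (g := g) (q := q) hβ hB hvv n
    have h3 : (0:ℝ) ≤ (v' - v) * β⁻¹ := mul_nonneg (by linarith) (by positivity)
    linarith
  · intro n v v' hvv
    have h1 := gapp_incr_low (g := g) (q := q) hβ hB hvv n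
    have h4 : β * ((v' - v) * β⁻¹) = v' - v := by field_simp
    nlinarith
  · intro n v hv
    rw [abs_le]
    exact ⟨gapp_ge_negB hβ hB hgb hq0 hv, gapp_le_B hβ hB hganti hgb hq hv⟩
  · intro v hv
    exact gapp_tendsto hβ hB hganti hgb hq hq0 hdense hv (hcont v hv)

end Pack

/-! ### generic clamp -/

noncomputable def clampk (a b x : ℝ) : ℝ := max a (min b x)

lemma clampk_mem {a b : ℝ} (h : a ≤ b) (x : ℝ) : clampk a b x ∈ Set.Icc a b :=
  ⟨le_max_left _ _, max_le h (min_le_left _ _)⟩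

lemma clampk_of_mem {a b x : ℝ} (h : x ∈ Set.Icc a b) : clampk a b x = x := by
  rw [clampk, min_eq_right h.2, max_eq_right h.1]

lemma clampk_continuous (a b : ℝ) : Continuous (clampk a b) :=
  continuous_const.max (continuous_const.min continuous_id)

lemma clampk_mono (a b : ℝ) : Monotone (clampk a b) := fun x y hxy =>
  max_le_max le_rfl (min_le_min le_rfl hxy)

lemma clampk_sub_le {a b x y : ℝ} (h : x ≤ y) : clampk a b y - clampk a b x ≤ y - x := by
  have h1 : min b y ≤ min b x + (y - x) := by
    rcases le_total b x with h' | h'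
    · rw [min_eq_left h']
      exact le_trans (min_le_left _ _) (by linarith)
    · rw [min_eq_right h']
      exact le_trans (min_le_right _ _) (by linarith)
  have h2 : clampk a b y ≤ clampk a b x + (y - x) := by
    rw [clampk, clampk]
    refine max_le ?_ ?_
    · have := le_max_left a (min b x); linarith
    · have := le_max_right a (min b x); linarith
  linarith

/-! ### statement definitions -/

lemma label_mem (b : Bool) : label b ∈ Set.Icc (0:ℝ) 1 := by
  cases b <;> simp [label]

/-- pointwise inequality controlling the clipping error -/
lemma key_ptwise {u y h ε C : ℝ} (hu : u ∈ Set.Icc (0:ℝ) 1) (hy : y ∈ Set.Icc (0:ℝ) 1)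
    (hC : |h| ≤ C) (hε : 0 < ε) :
    (u - y) * (clamp01 (u + ε * h) - u) - ε^2 * C^2 ≤ (u - y) * (ε * h) := by
  have hC0 : 0 ≤ C := le_trans (abs_nonneg _) hC
  have hh1 : -(ε*C) ≤ ε*h := by nlinarith [(abs_le.1 hC).1]
  have hh2 : ε*h ≤ ε*C := by nlinarith [(abs_le.1 hC).2]
  set p := u + ε * h with hp
  rcases lt_or_ge (1:ℝ) p with h1 | h1
  · have hcl : clamp01 p = 1 := by
      rw [clamp01, min_eq_left h1.le]
      exact max_eq_right zero_le_one
    rw [hcl]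
    have hs1 : 0 < p - 1 := by linarith
    have hs2 : p - 1 ≤ ε*C := by
      have := hu.2; linarith
    have huy : -(ε*C) ≤ u - y := by
      have := hy.2; linarith
    nlinarith
  · rcases lt_or_ge p 0 with h0 | h0
    · have hcl : clamp01 p = 0 := by
        rw [clamp01, min_eq_right (by linarith : p ≤ 1)]
        exact max_eq_left h0.le
      rw [hcl]
      have hs1 : p < 0 := h0
      have hs2 : -(ε*C) ≤ p := by
        have := hu.1; linarith
      have huy : u - y ≤ ε*C := by
        have := hy.1; linarith
      nlinarith
    · have hcl : clamp01 p = p := clamp01_of_mem ⟨h0, h1⟩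
      rw [hcl]
      have hpu : p - u = ε * h := by rw [hp]; ring
      rw [hpu]
      nlinarith [sq_nonneg (ε*C)]

set_option maxHeartbeats 1000000 in
lemma lemmaA
    (d : ℕ) (L R β : ℝ) (hL : 0 < L) (hR : 0 < R) (hβ : 0 < β)
    (D : Measure (EuclideanSpace ℝ (Fin d) × Bool)) [IsProbabilityMeasure D]
    (hX : ∀ᵐ z ∂D, ‖z.1‖ ≤ L)
    (w : EuclideanSpace ℝ (Fin d)) (hw : ‖w‖ ≤ R)
    (σ : ℝ → ℝ)
    (hσ_range : ∀ t ∈ Set.Icc (-(L*R)) (L*R), σ t ∈ Set.Icc (0:ℝ) 1)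
    (hσ_lip : BiLipOn 0 β σ (Set.Icc (-(L*R)) (L*R)))
    (hσ_min : ∀ σ' : ℝ → ℝ,
      (∀ t ∈ Set.Icc (-(L*R)) (L*R), σ' t ∈ Set.Icc (0:ℝ) 1) →
      BiLipOn 0 β σ' (Set.Icc (-(L*R)) (L*R)) →
      (∫ z, (σ (dotp w z.1) - label z.2)^2 ∂D)
        ≤ ∫ z, (σ' (dotp w z.1) - label z.2)^2 ∂D)
    (G : ℝ → ℝ) (hGc : Continuous G) (K : ℝ) (hK : 0 < K)
    (hG_up : ∀ v v' : ℝ, v ≤ v' → G v' - G v ≤ K * (v' - v))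
    (hG_low : ∀ v v' : ℝ, v ≤ v' → v' - v ≤ β * (G v' - G v))
    (hG_bdd : ∀ v ∈ Set.Icc (0:ℝ) 1, |G v| ≤ L*R) :
    0 ≤ ∫ z, (clamp01 (σ (clampk (-(L*R)) (L*R) (dotp w z.1))) - label z.2)
        * (clampk (-(L*R)) (L*R) (dotp w z.1)
          - G (clamp01 (σ (clampk (-(L*R)) (L*R) (dotp w z.1))))) ∂D := by
  have hB : 0 < L*R := mul_pos hL hR
  have hIcc : -(L*R) ≤ L*R := by linarith
  set X : EuclideanSpace ℝ (Fin d) × Bool → ℝ := fun z => dotp w z.1 with hXdef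
  set Xc : EuclideanSpace ℝ (Fin d) × Bool → ℝ := fun z => clampk (-(L*R)) (L*R) (X z)
    with hXcdef
  set U : EuclideanSpace ℝ (Fin d) × Bool → ℝ := fun z => clamp01 (σ (Xc z)) with hUdef
  set Y : EuclideanSpace ℝ (Fin d) × Bool → ℝ := fun z => label z.2 with hYdef
  -- continuity / measurability
  have hXcont : Continuous X := by
    rw [hXdef]; unfold dotp
    exact Continuous.inner continuous_const continuous_fst
  have hXccont : Continuous Xc := (clampk_continuous _ _).comp hXcont
  have hclamp01c : Continuous clamp01 := continuous_const.max (continuous_const.min continuous_id)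
  have hσkey : ∀ a b : ℝ, a ≤ b →
      |σ (clampk (-(L*R)) (L*R) b) - σ (clampk (-(L*R)) (L*R) a)| ≤ β * (b - a) := by
    intro a b hab
    have hca := clampk_mem hIcc a
    have hcb := clampk_mem hIcc b
    have hcc := clampk_mono (-(L*R)) (L*R) hab
    obtain ⟨hl, hu⟩ := hσ_lip hca hcb hcc
    rw [zero_mul] at hl
    rw [abs_of_nonneg hl]
    refine le_trans hu ?_
    have := clampk_sub_le (a := -(L*R)) (b := L*R) hab
    nlinarith
  have hσcont : Continuous fun x => σ (clampk (-(L*R)) (L*R) x) := by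
    have : LipschitzWith (Real.toNNReal β) (fun x => σ (clampk (-(L*R)) (L*R) x)) := by
      refine LipschitzWith.of_dist_le_mul fun a b => ?_
      rw [Real.dist_eq, Real.dist_eq, Real.coe_toNNReal _ hβ.le]
      rcases le_total a b with hab | hab
      · have e : |a - b| = b - a := by rw [abs_sub_comm, abs_of_nonneg (by linarith)]
        rw [e, abs_sub_comm]
        exact hσkey a b hab
      · have e : |a - b| = a - b := abs_of_nonneg (by linarith)
        rw [e]
        exact hσkey b a hab
    exact this.continuous
  have hUcont : Continuous U := hclamp01c.comp (hσcont.comp hXcont)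
  have hYm : Measurable Y := (measurable_of_countable label).comp measurable_snd
  -- bounds
  have hUb : ∀ z, U z ∈ Set.Icc (0:ℝ) 1 := fun z => clamp01_mem _
  have hYb : ∀ z, Y z ∈ Set.Icc (0:ℝ) 1 := fun z => label_mem _
  have hXcb : ∀ z, |Xc z| ≤ L*R := fun z =>
    abs_le.2 ⟨(clampk_mem hIcc _).1, (clampk_mem hIcc _).2⟩
  have hGUb : ∀ z, |G (U z)| ≤ L*R := fun z => hG_bdd _ (hUb z)
  have hH : ∀ z, |Xc z - G (U z)| ≤ 2*(L*R) := by
    intro z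
    have h1 := abs_le.1 (hXcb z)
    have h2 := abs_le.1 (hGUb z)
    rw [abs_le]; constructor <;> linarith [h1.1, h1.2, h2.1, h2.2]
  have hUYb : ∀ z, |U z - Y z| ≤ 1 := by
    intro z
    have h1 := hUb z
    have h2 := hYb z
    rw [abs_le]; constructor <;> [linarith [h1.1, h2.2]; linarith [h1.2, h2.1]]
  -- integrability helper
  have intBdd : ∀ (f : EuclideanSpace ℝ (Fin d) × Bool → ℝ), Measurable f →
      ∀ c : ℝ, (∀ z, |f z| ≤ c) → Integrable f D := by
    intro f hm c hc
    refine (integrable_const c).mono' hm.aestronglyMeasurable ?_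
    exact ae_of_all _ fun z => by rw [Real.norm_eq_abs]; exact hc z
  -- the a.e. event
  have hXae : ∀ᵐ z ∂D, X z ∈ Set.Icc (-(L*R)) (L*R) := by
    filter_upwards [hX] with z hz
    have h1 : |X z| ≤ ‖w‖ * ‖z.1‖ := abs_real_inner_le_norm w z.1
    have h2 : ‖w‖ * ‖z.1‖ ≤ R * L :=
      mul_le_mul hw hz (norm_nonneg _) (le_trans (norm_nonneg _) hw)
    have h3 : |X z| ≤ L*R := by rw [mul_comm L R]; linarith
    exact abs_le.1 h3
  -- main quantitative step
  have main : ∀ ε : ℝ, 0 < ε → ε ≤ β → ε * K ≤ 1 →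
      -(6*(L*R)^2)*ε ≤ ∫ z, (U z - Y z) * (Xc z - G (U z)) ∂D := by
    intro ε hε hεβ hεK
    set σ' : ℝ → ℝ := fun t => clamp01 (σ t + ε * (t - G (σ t))) with hσ'def
    have hr' : ∀ t ∈ Set.Icc (-(L*R)) (L*R), σ' t ∈ Set.Icc (0:ℝ) 1 := fun t _ => clamp01_mem _
    have hl' : BiLipOn 0 β σ' (Set.Icc (-(L*R)) (L*R)) := by
      intro x hx y hy hxy
      have hσx := hσ_range x hx
      have hσy := hσ_range y hy
      obtain ⟨hm1, hm2⟩ := hσ_lip hx hy hxy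
      rw [zero_mul] at hm1
      have hσxy : σ x ≤ σ y := by linarith
      have hGl := hG_low (σ x) (σ y) hσxy
      have hGu := hG_up (σ x) (σ y) hσxy
      have hab : σ x + ε * (x - G (σ x)) ≤ σ y + ε * (y - G (σ y)) := by nlinarith
      have hba : (σ y + ε * (y - G (σ y))) - (σ x + ε * (x - G (σ x))) ≤ β * (y - x) := by
        have hε1 : ε * (σ y - σ x) ≤ ε * (β * (G (σ y) - G (σ x))) :=
          mul_le_mul_of_nonneg_left hGl hε.le
        have hε2 : (β - ε) * (σ y - σ x) ≤ (β - ε) * (β * (y - x)) :=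
          mul_le_mul_of_nonneg_left hm2 (by linarith)
        have hβpos := hβ
        nlinarith
      constructor
      · rw [zero_mul]
        have := clamp01_mono hab
        simp only [hσ'def]
        linarith
      · simp only [hσ'def]
        have := clamp01_sub_le hab
        linarith
    have hmin := hσ_min σ' hr' hl'
    set W : EuclideanSpace ℝ (Fin d) × Bool → ℝ :=
      fun z => clamp01 (U z + ε * (Xc z - G (U z))) with hWdef
    have hWcont : Continuous W :=
      hclamp01c.comp (hUcont.add (continuous_const.mul (hXccont.sub (hGc.comp hUcont))))
    have hWb : ∀ z, W z ∈ Set.Icc (0:ℝ) 1 := fun z => clamp01_mem _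
    -- a.e. identification
    have hae0 : ∀ᵐ z ∂D, U z = σ (X z) ∧ Xc z = X z := by
      filter_upwards [hXae] with z hz
      have hxc : Xc z = X z := by rw [hXcdef]; exact clampk_of_mem hz
      constructor
      · rw [hUdef]
        simp only [hxc]
        exact clamp01_of_mem (hσ_range _ hz)
      · exact hxc
    have hae1 : (fun z => (σ (dotp w z.1) - label z.2)^2) =ᵐ[D] fun z => (U z - Y z)^2 := by
      filter_upwards [hae0] with z hz
      rw [hz.1]
    have hae2 : (fun z => (σ' (dotp w z.1) - label z.2)^2) =ᵐ[D] fun z => (W z - Y z)^2 := by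
      filter_upwards [hae0] with z hz
      have : σ' (X z) = W z := by
        rw [hσ'def, hWdef]
        simp only [hz.1, hz.2]
      rw [← this]
    -- integrability
    have hUYm : Measurable fun z => U z - Y z := hUcont.measurable.sub hYm
    have hWYm : Measurable fun z => W z - Y z := hWcont.measurable.sub hYm
    have int1 : Integrable (fun z => (U z - Y z)^2) D := by
      refine intBdd _ (hUYm.pow_const 2) 1 fun z => ?_
      rw [abs_of_nonneg (sq_nonneg _)]
      have := hUYb z
      nlinarith [abs_nonneg (U z - Y z), sq_abs (U z - Y z)]
    have hWYb : ∀ z, |W z - Y z| ≤ 1 := by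
      intro z
      have h1 := hWb z
      have h2 := hYb z
      rw [abs_le]; constructor <;> [linarith [h1.1, h2.2]; linarith [h1.2, h2.1]]
    have int2 : Integrable (fun z => (W z - Y z)^2) D := by
      refine intBdd _ (hWYm.pow_const 2) 1 fun z => ?_
      rw [abs_of_nonneg (sq_nonneg _)]
      have := hWYb z
      nlinarith [abs_nonneg (W z - Y z), sq_abs (W z - Y z)]
    have hδb : ∀ z, |W z - U z| ≤ ε*(2*(L*R)) := by
      intro z
      have e2 : W z = clamp01 (U z + ε * (Xc z - G (U z))) := rfl
      rw [e2]
      refine le_trans (clamp01_shift_abs _ (hUb z)) ?_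
      have e3 : U z + ε * (Xc z - G (U z)) - U z = ε * (Xc z - G (U z)) := by ring
      rw [e3, abs_mul, abs_of_nonneg hε.le]
      exact mul_le_mul_of_nonneg_left (hH z) hε.le
    have hδm : Measurable fun z => W z - U z := hWcont.measurable.sub hUcont.measurable
    have intδ2 : Integrable (fun z => (W z - U z)^2) D := by
      refine intBdd _ (hδm.pow_const 2) ((ε*(2*(L*R)))^2) fun z => ?_
      rw [abs_of_nonneg (sq_nonneg _)]
      exact sq_le_sq' (by linarith [abs_le.1 (hδb z)]) (abs_le.1 (hδb z)).2
    have intδUY : Integrable (fun z => (W z - U z) * (U z - Y z)) D := by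
      refine intBdd _ (hδm.mul hUYm) (ε*(2*(L*R))) fun z => ?_
      rw [abs_mul]
      calc |W z - U z| * |U z - Y z| ≤ (ε*(2*(L*R))) * 1 :=
            mul_le_mul (hδb z) (hUYb z) (abs_nonneg _) (by positivity)
        _ = ε*(2*(L*R)) := by ring
    have intA : Integrable (fun z => (U z - Y z) * (Xc z - G (U z))) D := by
      refine intBdd _ (hUYm.mul (hXccont.measurable.sub (hGc.measurable.comp hUcont.measurable)))
        (2*(L*R)) fun z => ?_
      rw [abs_mul]
      calc |U z - Y z| * |Xc z - G (U z)| ≤ 1 * (2*(L*R)) :=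
            mul_le_mul (hUYb z) (hH z) (abs_nonneg _) zero_le_one
        _ = 2*(L*R) := by ring
    -- step 1 : minimality
    have h1 : ∫ z, (U z - Y z)^2 ∂D ≤ ∫ z, (W z - Y z)^2 ∂D := by
      calc ∫ z, (U z - Y z)^2 ∂D = ∫ z, (σ (dotp w z.1) - label z.2)^2 ∂D :=
            (integral_congr_ae hae1).symm
        _ ≤ ∫ z, (σ' (dotp w z.1) - label z.2)^2 ∂D := hmin
        _ = ∫ z, (W z - Y z)^2 ∂D := integral_congr_ae hae2
    -- step 2 : expansion
    have h4 : 0 ≤ (∫ z, (W z - U z)^2 ∂D) + 2 * ∫ z, (W z - U z) * (U z - Y z) ∂D := by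
      have e0 : ∫ z, ((W z - Y z)^2 - (U z - Y z)^2) ∂D
          = (∫ z, (W z - Y z)^2 ∂D) - ∫ z, (U z - Y z)^2 ∂D := integral_sub int2 int1
      have e1 : ∫ z, ((W z - Y z)^2 - (U z - Y z)^2) ∂D
          = (∫ z, (W z - U z)^2 ∂D) + ∫ z, 2 * ((W z - U z) * (U z - Y z)) ∂D := by
        rw [← integral_add intδ2 (intδUY.const_mul 2)]
        refine integral_congr_ae (ae_of_all _ fun z => ?_)
        ring
      have e2 : ∫ z, 2 * ((W z - U z) * (U z - Y z)) ∂D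
          = 2 * ∫ z, (W z - U z) * (U z - Y z) ∂D := integral_const_mul 2 _
      rw [e2] at e1
      linarith
    -- step 3 : bound on ∫ δ²
    have h5 : ∫ z, (W z - U z)^2 ∂D ≤ (ε*(2*(L*R)))^2 := by
      have hint : ∫ z, ((ε*(2*(L*R)))^2 : ℝ) ∂D = (ε*(2*(L*R)))^2 := by
        simp [measure_univ]
      rw [← hint]
      refine integral_mono intδ2 (integrable_const _) fun z => ?_
      exact sq_le_sq' (by linarith [abs_le.1 (hδb z)]) (abs_le.1 (hδb z)).2
    have h6 : -(2*(L*R)^2*ε^2) ≤ ∫ z, (W z - U z) * (U z - Y z) ∂D := by nlinarith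
    -- step 4 : pointwise clipping inequality, integrated
    have h7 : ∀ z, (U z - Y z) * (W z - U z) - ε^2 * (2*(L*R))^2
        ≤ (U z - Y z) * (ε * (Xc z - G (U z))) := by
      intro z
      exact key_ptwise (hUb z) (hYb z) (hH z) hε
    have h8 : (∫ z, (W z - U z) * (U z - Y z) ∂D) - ε^2 * (2*(L*R))^2
        ≤ ε * ∫ z, (U z - Y z) * (Xc z - G (U z)) ∂D := by
      have intL : Integrable (fun z => (U z - Y z) * (W z - U z) - ε^2 * (2*(L*R))^2) D := by
        refine Integrable.sub ?_ (integrable_const _)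
        refine intBdd _ (hUYm.mul hδm) (ε*(2*(L*R))) fun z => ?_
        rw [abs_mul]
        calc |U z - Y z| * |W z - U z| ≤ 1 * (ε*(2*(L*R))) :=
              mul_le_mul (hUYb z) (hδb z) (abs_nonneg _) zero_le_one
          _ = ε*(2*(L*R)) := by ring
      have intR : Integrable (fun z => ε * ((U z - Y z) * (Xc z - G (U z)))) D :=
        intA.const_mul ε
      have := integral_mono intL intR (fun z => by
        have := h7 z
        simp only
        nlinarith [h7 z])
      rw [integral_sub (by
          refine intBdd _ (hUYm.mul hδm) (ε*(2*(L*R))) fun z => ?_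
          rw [abs_mul]
          calc |U z - Y z| * |W z - U z| ≤ 1 * (ε*(2*(L*R))) :=
                mul_le_mul (hUYb z) (hδb z) (abs_nonneg _) zero_le_one
            _ = ε*(2*(L*R)) := by ring) (integrable_const _), integral_const,
        integral_const_mul] at this
      simp [measure_univ] at this
      have ecomm : ∫ z, (U z - Y z) * (W z - U z) ∂D
          = ∫ z, (W z - U z) * (U z - Y z) ∂D := by
        refine integral_congr_ae (ae_of_all _ fun z => ?_)
        ring
      rw [ecomm] at this
      linarith
    -- combine
    have hfin : -(6*(L*R)^2) * ε^2 ≤ ε * ∫ z, (U z - Y z) * (Xc z - G (U z)) ∂D := by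
      linarith
    have := (mul_le_mul_iff_right₀ hε).1 (by linarith : ε * (-(6*(L*R)^2)*ε)
      ≤ ε * ∫ z, (U z - Y z) * (Xc z - G (U z)) ∂D)
    linarith
  -- conclude by letting ε → 0
  by_contra hcon
  push_neg at hcon
  set I := ∫ z, (U z - Y z) * (Xc z - G (U z)) ∂D with hIdef
  have hI : 0 < -I := by
    simp only [hIdef]
    linarith
  set ε := min (min β K⁻¹) (-I / (12*(L*R)^2)) with hεdef
  have hεpos : 0 < ε := lt_min (lt_min hβ (inv_pos.2 hK)) (by positivity)
  have hεβ : ε ≤ β := le_trans (min_le_left _ _) (min_le_left _ _)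
  have hεK : ε * K ≤ 1 := by
    have h1 : ε ≤ K⁻¹ := le_trans (min_le_left _ _) (min_le_right _ _)
    calc ε * K ≤ K⁻¹ * K := mul_le_mul_of_nonneg_right h1 hK.le
      _ = 1 := inv_mul_cancel₀ hK.ne'
  have hmain := main ε hεpos hεβ hεK
  have h12 : ε ≤ -I / (12*(L*R)^2) := min_le_right _ _
  have hq : ε * (12*(L*R)^2) ≤ -I := by
    rw [le_div_iff₀ (by positivity : (0:ℝ) < 12*(L*R)^2)] at h12
    exact h12
  linarith

set_option maxHeartbeats 1000000 in
/-- Population-level first-order optimality condition for bounded isotonic regression. -/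
theorem population_bir_optimality
    (d : ℕ) (L R β : ℝ) (hL : 0 < L) (hR : 0 < R) (hβ : 0 < β)
    (D : Measure (EuclideanSpace ℝ (Fin d) × Bool)) [IsProbabilityMeasure D]
    (hX : ∀ᵐ z ∂D, ‖z.1‖ ≤ L)
    (w : EuclideanSpace ℝ (Fin d)) (hw : ‖w‖ ≤ R)
    (σ : ℝ → ℝ)
    (hσ_range : ∀ t ∈ Set.Icc (-(L*R)) (L*R), σ t ∈ Set.Icc (0:ℝ) 1)
    (hσ_lip : BiLipOn 0 β σ (Set.Icc (-(L*R)) (L*R)))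
    (hσ_min : ∀ σ' : ℝ → ℝ,
      (∀ t ∈ Set.Icc (-(L*R)) (L*R), σ' t ∈ Set.Icc (0:ℝ) 1) →
      BiLipOn 0 β σ' (Set.Icc (-(L*R)) (L*R)) →
      (∫ z, (σ (dotp w z.1) - label z.2)^2 ∂D)
        ≤ ∫ z, (σ' (dotp w z.1) - label z.2)^2 ∂D)
    (g : ℝ → ℝ)
    (hg_mono : MonotoneOn g (Set.Icc (0:ℝ) 1))
    (hg_range : ∀ v ∈ Set.Icc (0:ℝ) 1, g v ∈ Set.Icc (-(L*R)) (L*R))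
    (hg_antilip : ∀ v ∈ Set.Icc (0:ℝ) 1, ∀ v' ∈ Set.Icc (0:ℝ) 1, v ≤ v' →
      v' - v ≤ β * (g v' - g v)) :
    0 ≤ ∫ z, (σ (dotp w z.1) - label z.2) * (dotp w z.1 - g (σ (dotp w z.1))) ∂D := by
  have hB : 0 < L*R := mul_pos hL hR
  have hIcc : -(L*R) ≤ L*R := by linarith
  have hgb : ∀ v ∈ Set.Icc (0:ℝ) 1, |g v| ≤ L*R := fun v hv =>
    abs_le.2 ⟨(hg_range v hv).1, (hg_range v hv).2⟩
  obtain ⟨G, hGc, hGlip, hGanti, hGb, hGt⟩ := exists_approx β (L*R) g hβ hB hg_antilip hgb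
  set X : EuclideanSpace ℝ (Fin d) × Bool → ℝ := fun z => dotp w z.1 with hXdef
  set Xc : EuclideanSpace ℝ (Fin d) × Bool → ℝ := fun z => clampk (-(L*R)) (L*R) (X z)
    with hXcdef
  set U : EuclideanSpace ℝ (Fin d) × Bool → ℝ := fun z => clamp01 (σ (Xc z)) with hUdef
  set Y : EuclideanSpace ℝ (Fin d) × Bool → ℝ := fun z => label z.2 with hYdef
  have hXcont : Continuous X := by
    rw [hXdef]; unfold dotp
    exact Continuous.inner continuous_const continuous_fst
  have hXccont : Continuous Xc := (clampk_continuous _ _).comp hXcont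
  have hclamp01c : Continuous clamp01 := continuous_const.max (continuous_const.min continuous_id)
  have hσkey : ∀ a b : ℝ, a ≤ b →
      |σ (clampk (-(L*R)) (L*R) b) - σ (clampk (-(L*R)) (L*R) a)| ≤ β * (b - a) := by
    intro a b hab
    have hca := clampk_mem hIcc a
    have hcb := clampk_mem hIcc b
    have hcc := clampk_mono (-(L*R)) (L*R) hab
    obtain ⟨hl, hu⟩ := hσ_lip hca hcb hcc
    rw [zero_mul] at hl
    rw [abs_of_nonneg hl]
    refine le_trans hu ?_
    have := clampk_sub_le (a := -(L*R)) (b := L*R) hab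
    nlinarith
  have hσcont : Continuous fun x => σ (clampk (-(L*R)) (L*R) x) := by
    have : LipschitzWith (Real.toNNReal β) (fun x => σ (clampk (-(L*R)) (L*R) x)) := by
      refine LipschitzWith.of_dist_le_mul fun a b => ?_
      rw [Real.dist_eq, Real.dist_eq, Real.coe_toNNReal _ hβ.le]
      rcases le_total a b with hab | hab
      · have e : |a - b| = b - a := by rw [abs_sub_comm, abs_of_nonneg (by linarith)]
        rw [e, abs_sub_comm]
        exact hσkey a b hab
      · have e : |a - b| = a - b := abs_of_nonneg (by linarith)
        rw [e]
        exact hσkey b a hab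
    exact this.continuous
  have hUcont : Continuous U := hclamp01c.comp (hσcont.comp hXcont)
  have hYm : Measurable Y := (measurable_of_countable label).comp measurable_snd
  have hUb : ∀ z, U z ∈ Set.Icc (0:ℝ) 1 := fun z => clamp01_mem _
  have hYb : ∀ z, Y z ∈ Set.Icc (0:ℝ) 1 := fun z => label_mem _
  have hXcb : ∀ z, |Xc z| ≤ L*R := fun z =>
    abs_le.2 ⟨(clampk_mem hIcc _).1, (clampk_mem hIcc _).2⟩
  have hUYb : ∀ z, |U z - Y z| ≤ 1 := by
    intro z
    have h1 := hUb z
    have h2 := hYb z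
    rw [abs_le]; constructor <;> [linarith [h1.1, h2.2]; linarith [h1.2, h2.1]]
  have hXae : ∀ᵐ z ∂D, X z ∈ Set.Icc (-(L*R)) (L*R) := by
    filter_upwards [hX] with z hz
    have h1 : |X z| ≤ ‖w‖ * ‖z.1‖ := abs_real_inner_le_norm w z.1
    have h2 : ‖w‖ * ‖z.1‖ ≤ R * L :=
      mul_le_mul hw hz (norm_nonneg _) (le_trans (norm_nonneg _) hw)
    have h3 : |X z| ≤ L*R := by rw [mul_comm L R]; linarith
    exact abs_le.1 h3
  -- each approximant gives a nonnegative integral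
  have hpos : ∀ n, 0 ≤ ∫ z, (U z - Y z) * (Xc z - G n (U z)) ∂D := by
    intro n
    obtain ⟨K, hKpos, hKup⟩ := hGlip n
    exact lemmaA d L R β hL hR hβ D hX w hw σ hσ_range hσ_lip hσ_min (G n) (hGc n) K hKpos
      hKup (fun v v' h => hGanti n v v' h) (fun v hv => hGb n v hv)
  -- dominated convergence
  have hlim : Filter.Tendsto (fun n => ∫ z, (U z - Y z) * (Xc z - G n (U z)) ∂D)
      Filter.atTop (nhds (∫ z, (U z - Y z) * (Xc z - g (U z)) ∂D)) := by
    refine tendsto_integral_of_dominated_convergence (fun _ => 2*(L*R)) ?_ ?_ ?_ ?_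
    · intro n
      exact ((hUcont.measurable.sub hYm).mul
        (hXccont.measurable.sub ((hGc n).measurable.comp hUcont.measurable))).aestronglyMeasurable
    · exact integrable_const _
    · intro n
      refine ae_of_all _ fun z => ?_
      rw [Real.norm_eq_abs, abs_mul]
      have h1 : |Xc z - G n (U z)| ≤ 2*(L*R) := by
        have ha := abs_le.1 (hXcb z)
        have hb := abs_le.1 (hGb n (U z) (hUb z))
        rw [abs_le]; constructor <;> linarith [ha.1, ha.2, hb.1, hb.2]
      calc |U z - Y z| * |Xc z - G n (U z)| ≤ 1 * (2*(L*R)) :=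
            mul_le_mul (hUYb z) h1 (abs_nonneg _) zero_le_one
        _ = 2*(L*R) := by ring
    · refine ae_of_all _ fun z => ?_
      have hGz := hGt (U z) (hUb z)
      exact (Filter.Tendsto.const_sub (Xc z) hGz).const_mul (U z - Y z)
  have key : 0 ≤ ∫ z, (U z - Y z) * (Xc z - g (U z)) ∂D := ge_of_tendsto' hlim hpos
  have hae : (fun z => (σ (dotp w z.1) - label z.2) * (dotp w z.1 - g (σ (dotp w z.1))))
      =ᵐ[D] fun z => (U z - Y z) * (Xc z - g (U z)) := by
    filter_upwards [hXae] with z hz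
    have hxc : Xc z = X z := by rw [hXcdef]; exact clampk_of_mem hz
    have hu : U z = σ (X z) := by
      rw [hUdef]
      simp only [hxc]
      exact clamp01_of_mem (hσ_range _ hz)
    simp only [hu, hxc]
    rfl
  rw [show (∫ z, (σ (dotp w z.1) - label z.2) * (dotp w z.1 - g (σ (dotp w z.1))) ∂D)
    = ∫ z, (U z - Y z) * (Xc z - g (U z)) ∂D from integral_congr_ae hae]
  exact key
end P2
end

section
/- Let d ∈ ℕ, L, R, β > 0. Let D be a probability distribution on X × {0,1} with X ⊆ B(L) ⊆ ℝ^d, and suppose there exist w* ∈ B(R) and a non-decreasing β-Lipschitz bijection ss : [−LR, LR] → [0,1] with inverse g := ss^{-1} such that P_D(y = 1 | x) = ss(w*·x) for all x ∈ X. Fix w ∈ B(R) and let σ : [−LR,LR] → [0,1] be a minimizer, over non-decreasing β-Lipschitz functions, of E_{(x,y)∼D}[(σ(w·x) − y)²], and set Δ := E_{x∼D_x}[(σ(w·x) − ss(w*·x))²]. Then: (i) Δ/β ≤ E_{(x,y)∼D}[(σ(w·x) − y)(g(σ(w·x)) − w*·x)]; and (ii) for every non-decreasing β-Lipschitz bijection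 σ′ : [−LR,LR] → [0,1] with inverse g′ and every w′ ∈ B(R), E_{(x,y)∼D}[(σ(w·x) − y)(g′(σ(w·x)) − w′·x)] ≤ 2LR·√Δ. -/
open MeasureTheory
open scoped ENNReal NNReal

/-- A feasible link: non-decreasing, `β`-Lipschitz, mapping `[-LR, LR]` into `[0,1]`. -/
def Feasible (L R β : ℝ) (σ : ℝ → ℝ) : Prop :=
  (∀ t ∈ Set.Icc (-(L*R)) (L*R), σ t ∈ Set.Icc (0:ℝ) 1) ∧
  BiLipOn 0 β σ (Set.Icc (-(L*R)) (L*R))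

/-- `(σ, g)` is a feasible link bijection pair: `σ` is a non-decreasing `β`-Lipschitz
bijection from `[-LR, LR]` to `[0,1]` and `g` is its inverse. -/
def LinkInv (L R β : ℝ) (σ g : ℝ → ℝ) : Prop :=
  Feasible L R β σ ∧
  Set.BijOn σ (Set.Icc (-(L*R)) (L*R)) (Set.Icc (0:ℝ) 1) ∧
  (∀ v ∈ Set.Icc (0:ℝ) 1, g v ∈ Set.Icc (-(L*R)) (L*R)) ∧
  (∀ t ∈ Set.Icc (-(L*R)) (L*R), g (σ t) = t) ∧
  (∀ v ∈ Set.Icc (0:ℝ) 1, σ (g v) = v)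

/- ### Auxiliary lemmas -/

lemma clampI_mono_s6 (a b : ℝ) : Monotone (fun t : ℝ => max a (min b t)) :=
  fun _ _ h => max_le_max le_rfl (min_le_min le_rfl h)

lemma clampI_mem_s6 {a b : ℝ} (h : a ≤ b) (t : ℝ) : max a (min b t) ∈ Set.Icc a b :=
  ⟨le_max_left _ _, max_le h (min_le_left _ _)⟩

lemma clampI_eq_s6 {a b t : ℝ} (h : t ∈ Set.Icc a b) : max a (min b t) = t := by
  rw [min_eq_right h.2, max_eq_right h.1]

lemma BiLipOn.monotoneOn' {b : ℝ} {σ : ℝ → ℝ} {s : Set ℝ} (h : BiLipOn 0 b σ s) :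
    MonotoneOn σ s := fun x hx y hy hxy => by
  have := (h hx hy hxy).1; nlinarith

/-- The inverse of a feasible link bijection is non-decreasing on `[0,1]`. -/
lemma LinkInv.inv_mono {L R β : ℝ} {s g : ℝ → ℝ} (h : LinkInv L R β s g) :
    ∀ u ∈ Set.Icc (0:ℝ) 1, ∀ v ∈ Set.Icc (0:ℝ) 1, u ≤ v → g u ≤ g v := by
  intro u hu v hv huv
  by_contra hlt
  push_neg at hlt
  have h1 := (h.1.2 (h.2.2.1 v hv) (h.2.2.1 u hu) hlt.le).1
  rw [h.2.2.2.2 u hu, h.2.2.2.2 v hv] at h1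
  have huv' : u = v := le_antisymm huv (by nlinarith)
  rw [huv'] at hlt
  exact lt_irrefl _ hlt

/-- The inverse of a feasible link bijection grows at rate at least `1/β`. -/
lemma LinkInv.inv_grow {L R β : ℝ} {s g : ℝ → ℝ} (h : LinkInv L R β s g) :
    ∀ u ∈ Set.Icc (0:ℝ) 1, ∀ v ∈ Set.Icc (0:ℝ) 1, u ≤ v → v - u ≤ β * (g v - g u) := by
  intro u hu v hv huv
  have h1 := (h.1.2 (h.2.2.1 u hu) (h.2.2.1 v hv) (h.inv_mono u hu v hv huv)).2
  rwa [h.2.2.2.2 u hu, h.2.2.2.2 v hv] at h1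

/-- In the realizable setting, the omnigap of the squared-loss best response is sandwiched
between `Δ/β` and `2LR√Δ`, where `Δ` is the excess squared loss. -/
theorem omnigap_squared_loss_relation
    (d : ℕ) (L R β : ℝ) (hL : 0 < L) (hR : 0 < R) (hβ : 0 < β)
    (D : Measure (EuclideanSpace ℝ (Fin d) × Bool)) [IsProbabilityMeasure D]
    (hX : ∀ᵐ z ∂D, ‖z.1‖ ≤ L)
    (wstar : EuclideanSpace ℝ (Fin d)) (hwstar : ‖wstar‖ ≤ R)
    (ss gs : ℝ → ℝ) (hss : LinkInv L R β ss gs)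
    -- realizability: P_D(y = 1 | x) = ss(w* · x)
    (hreal : ∀ A : Set (EuclideanSpace ℝ (Fin d)), MeasurableSet A →
      D (A ×ˢ ({true} : Set Bool))
        = ∫⁻ x in A, ENNReal.ofReal (ss (dotp wstar x)) ∂D.fst)
    (w : EuclideanSpace ℝ (Fin d)) (hw : ‖w‖ ≤ R)
    (σ : ℝ → ℝ) (hσ_feas : Feasible L R β σ)
    (hσ_min : ∀ σ' : ℝ → ℝ, Feasible L R β σ' →
      (∫ z, (σ (dotp w z.1) - label z.2)^2 ∂D)
        ≤ ∫ z, (σ' (dotp w z.1) - label z.2)^2 ∂D)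
    (Δ : ℝ) (hΔ : Δ = ∫ x, (σ (dotp w x) - ss (dotp wstar x))^2 ∂D.fst) :
    Δ / β ≤ (∫ z, (σ (dotp w z.1) - label z.2)
                * (gs (σ (dotp w z.1)) - dotp wstar z.1) ∂D) ∧
    ∀ σ' g' : ℝ → ℝ, LinkInv L R β σ' g' →
      ∀ w' : EuclideanSpace ℝ (Fin d), ‖w'‖ ≤ R →
        (∫ z, (σ (dotp w z.1) - label z.2)
            * (g' (σ (dotp w z.1)) - dotp w' z.1) ∂D)
          ≤ 2 * L * R * Real.sqrt Δ := by
  have hc0 : 0 < L * R := mul_pos hL hR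
  set c : ℝ := L * R with hcdef
  have hcc : -c ≤ c := by linarith
  -- clamped versions of the relevant functions
  set cl : ℝ → ℝ := fun t => max (-c) (min c t) with hcl
  set cl1 : ℝ → ℝ := fun v => max 0 (min 1 v) with hcl1
  set sc : ℝ → ℝ := fun t => σ (cl t) with hsc
  set ssc : ℝ → ℝ := fun t => ss (cl t) with hssc
  set gsc : ℝ → ℝ := fun v => gs (cl1 v) with hgsc
  -- basic properties of the clamped functions
  have hcleq : ∀ {t : ℝ}, t ∈ Set.Icc (-c) c → cl t = t := fun h => clampI_eq_s6 h
  have hcl1eq : ∀ {v : ℝ}, v ∈ Set.Icc (0:ℝ) 1 → cl1 v = v := fun h => clampI_eq_s6 h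
  have hsc_mem : ∀ t, sc t ∈ Set.Icc (0:ℝ) 1 := fun t => hσ_feas.1 _ (clampI_mem_s6 hcc t)
  have hssc_mem : ∀ t, ssc t ∈ Set.Icc (0:ℝ) 1 := fun t => hss.1.1 _ (clampI_mem_s6 hcc t)
  have hgsc_mem : ∀ v, gsc v ∈ Set.Icc (-c) c := fun v => hss.2.2.1 _ (clampI_mem_s6 zero_le_one v)
  have hsceq : ∀ {t : ℝ}, t ∈ Set.Icc (-c) c → sc t = σ t := fun h => by
    show σ (cl _) = σ _; rw [hcleq h]
  have hssceq : ∀ {t : ℝ}, t ∈ Set.Icc (-c) c → ssc t = ss t := fun h => by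
    show ss (cl _) = ss _; rw [hcleq h]
  have hgsceq : ∀ {v : ℝ}, v ∈ Set.Icc (0:ℝ) 1 → gsc v = gs v := fun h => by
    show gs (cl1 _) = gs _; rw [hcl1eq h]
  have hsc_mono : Monotone sc := fun a b hab =>
    hσ_feas.2.monotoneOn' (clampI_mem_s6 hcc a) (clampI_mem_s6 hcc b) (clampI_mono_s6 _ _ hab)
  have hssc_mono : Monotone ssc := fun a b hab =>
    hss.1.2.monotoneOn' (clampI_mem_s6 hcc a) (clampI_mem_s6 hcc b) (clampI_mono_s6 _ _ hab)
  have hgsc_mono : Monotone gsc := fun a b hab =>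
    hss.inv_mono _ (clampI_mem_s6 zero_le_one a) _ (clampI_mem_s6 zero_le_one b)
      (clampI_mono_s6 _ _ hab)
  have hsc_meas : Measurable sc := hsc_mono.measurable
  have hssc_meas : Measurable ssc := hssc_mono.measurable
  have hgsc_meas : Measurable gsc := hgsc_mono.measurable
  have hdotc : ∀ v : EuclideanSpace ℝ (Fin d),
      Continuous (fun x : EuclideanSpace ℝ (Fin d) => dotp v x) :=
    fun v => continuous_const.inner continuous_id
  -- a.e. facts
  have hfst : D.fst = D.map Prod.fst := rfl
  have hXfst : ∀ᵐ x ∂D.fst, ‖x‖ ≤ L := by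
    rw [hfst, ae_map_iff measurable_fst.aemeasurable
      ((isClosed_le continuous_norm continuous_const).measurableSet)]
    exact hX
  have hdot : ∀ v : EuclideanSpace ℝ (Fin d), ‖v‖ ≤ R → ∀ x : EuclideanSpace ℝ (Fin d),
      ‖x‖ ≤ L → dotp v x ∈ Set.Icc (-c) c := by
    intro v hv x hx
    have h1 : |dotp v x| ≤ c := by
      calc |dotp v x| ≤ ‖v‖ * ‖x‖ := abs_real_inner_le_norm v x
        _ ≤ R * L := mul_le_mul hv hx (norm_nonneg _) hR.le
        _ = c := mul_comm R L
    exact Set.mem_Icc.mpr (abs_le.mp h1)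
  -- integrability helpers
  have hIfst : ∀ (g : EuclideanSpace ℝ (Fin d) → ℝ) (C : ℝ), Measurable g →
      (∀ᵐ x ∂D.fst, |g x| ≤ C) → Integrable g D.fst := fun g C hg hb =>
    ⟨hg.aestronglyMeasurable, HasFiniteIntegral.of_bounded (C := C)
      (by simpa [Real.norm_eq_abs] using hb)⟩
  have hID : ∀ (g : EuclideanSpace ℝ (Fin d) × Bool → ℝ) (C : ℝ), Measurable g →
      (∀ᵐ z ∂D, |g z| ≤ C) → Integrable g D := fun g C hg hb =>
    ⟨hg.aestronglyMeasurable, HasFiniteIntegral.of_bounded (C := C)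
      (by simpa [Real.norm_eq_abs] using hb)⟩
  -- the conditional-probability measure
  have hν : (D.restrict (Set.univ ×ˢ ({true} : Set Bool))).map Prod.fst
      = D.fst.withDensity (fun x => ENNReal.ofReal (ssc (dotp wstar x))) := by
    ext A hA
    rw [Measure.map_apply measurable_fst hA,
      Measure.restrict_apply (measurable_fst hA), withDensity_apply _ hA]
    have hAS : Prod.fst ⁻¹' A ∩ Set.univ ×ˢ ({true} : Set Bool)
        = A ×ˢ ({true} : Set Bool) := by
      ext z
      simp only [Set.mem_inter_iff, Set.mem_preimage, Set.mem_prod, Set.mem_univ,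
        Set.mem_singleton_iff, true_and]
    rw [hAS, hreal A hA]
    refine lintegral_congr_ae (ae_restrict_of_ae ?_)
    filter_upwards [hXfst] with x hx
    rw [hssceq (hdot wstar hwstar x hx)]
  -- key identity
  have hkey : ∀ f : EuclideanSpace ℝ (Fin d) → ℝ, Measurable f →
      (∀ᵐ x ∂D.fst, |f x| ≤ 2 * c) →
      (∫ z, (sc (dotp w z.1) - label z.2) * f z.1 ∂D)
        = ∫ x, (sc (dotp w x) - ssc (dotp wstar x)) * f x ∂D.fst := by
    intro f hfm hfb
    have hfbD : ∀ᵐ z ∂D, |f z.1| ≤ 2 * c :=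
      ae_of_ae_map measurable_fst.aemeasurable hfb
    have hgm1 : Measurable fun x : EuclideanSpace ℝ (Fin d) => sc (dotp w x) * f x :=
      (hsc_meas.comp (hdotc w).measurable).mul hfm
    have hm1 : Measurable fun z : EuclideanSpace ℝ (Fin d) × Bool =>
        sc (dotp w z.1) * f z.1 := hgm1.comp measurable_fst
    have hm2 : Measurable fun z : EuclideanSpace ℝ (Fin d) × Bool =>
        label z.2 * f z.1 := by
      have : Measurable (label) := measurable_of_countable _
      exact (this.comp measurable_snd).mul (hfm.comp measurable_fst)
    have habs_sc : ∀ t, |sc t| ≤ 1 := fun t =>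
      abs_le.mpr ⟨by linarith [(hsc_mem t).1], (hsc_mem t).2⟩
    have habs_lab : ∀ b, |label b| ≤ 1 := by
      intro b; cases b <;> simp [label]
    have hI1 : Integrable (fun z : EuclideanSpace ℝ (Fin d) × Bool =>
        sc (dotp w z.1) * f z.1) D := by
      refine hID _ (2 * c) hm1 ?_
      filter_upwards [hfbD] with z hz
      calc |sc (dotp w z.1) * f z.1| = |sc (dotp w z.1)| * |f z.1| := abs_mul _ _
        _ ≤ 1 * (2 * c) := mul_le_mul (habs_sc _) hz (abs_nonneg _) zero_le_one
        _ = 2 * c := one_mul _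
    have hI2 : Integrable (fun z : EuclideanSpace ℝ (Fin d) × Bool =>
        label z.2 * f z.1) D := by
      refine hID _ (2 * c) hm2 ?_
      filter_upwards [hfbD] with z hz
      calc |label z.2 * f z.1| = |label z.2| * |f z.1| := abs_mul _ _
        _ ≤ 1 * (2 * c) := mul_le_mul (habs_lab _) hz (abs_nonneg _) zero_le_one
        _ = 2 * c := one_mul _
    have hstep1 : (∫ z, (sc (dotp w z.1) - label z.2) * f z.1 ∂D)
        = (∫ z, sc (dotp w z.1) * f z.1 ∂D) - ∫ z, label z.2 * f z.1 ∂D := by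
      rw [← integral_sub hI1 hI2]
      congr 1; funext z; ring
    -- first integral as an integral over D.fst
    have hA1 : (∫ z, sc (dotp w z.1) * f z.1 ∂D)
        = ∫ x, sc (dotp w x) * f x ∂D.fst := by
      rw [hfst]
      exact (integral_map measurable_fst.aemeasurable hgm1.aestronglyMeasurable).symm
    -- second integral via the density
    have hdm : Measurable fun x : EuclideanSpace ℝ (Fin d) =>
        (ssc (dotp wstar x)).toNNReal :=
      (hssc_meas.comp (hdotc wstar).measurable).real_toNNReal
    have hA2 : (∫ z, label z.2 * f z.1 ∂D)
        = ∫ x, ssc (dotp wstar x) * f x ∂D.fst := by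
      calc (∫ z, label z.2 * f z.1 ∂D)
          = ∫ z, Set.indicator (Set.univ ×ˢ ({true} : Set Bool))
              (fun z : EuclideanSpace ℝ (Fin d) × Bool => f z.1) z ∂D := by
            refine integral_congr_ae (Filter.Eventually.of_forall fun z => ?_)
            rcases z with ⟨x, b⟩
            cases b <;> simp [label, Set.indicator]
        _ = ∫ z in Set.univ ×ˢ ({true} : Set Bool), f z.1 ∂D :=
            integral_indicator (MeasurableSet.univ.prod (measurableSet_singleton true))
        _ = ∫ x, f x ∂((D.restrict (Set.univ ×ˢ ({true} : Set Bool))).map Prod.fst) :=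
            (integral_map measurable_fst.aemeasurable hfm.aestronglyMeasurable).symm
        _ = ∫ x, f x ∂(D.fst.withDensity fun x => ENNReal.ofReal (ssc (dotp wstar x))) := by
            rw [hν]
        _ = ∫ x, (ssc (dotp wstar x)).toNNReal • f x ∂D.fst :=
            integral_withDensity_eq_integral_smul hdm f
        _ = ∫ x, ssc (dotp wstar x) * f x ∂D.fst := by
            refine integral_congr_ae (Filter.Eventually.of_forall fun x => ?_)
            show (ssc (dotp wstar x)).toNNReal • f x = ssc (dotp wstar x) * f x
            rw [NNReal.smul_def, smul_eq_mul, Real.coe_toNNReal _ (hssc_mem _).1]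
    -- integrability on the fst side
    have hIf1 : Integrable (fun x => sc (dotp w x) * f x) D.fst := by
      refine hIfst _ (2 * c) hgm1 ?_
      filter_upwards [hfb] with x hx
      calc |sc (dotp w x) * f x| = |sc (dotp w x)| * |f x| := abs_mul _ _
        _ ≤ 1 * (2 * c) := mul_le_mul (habs_sc _) hx (abs_nonneg _) zero_le_one
        _ = 2 * c := one_mul _
    have hIf2 : Integrable (fun x => ssc (dotp wstar x) * f x) D.fst := by
      refine hIfst _ (2 * c) ((hssc_meas.comp (hdotc wstar).measurable).mul hfm) ?_
      filter_upwards [hfb] with x hx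
      have habs_ssc : |ssc (dotp wstar x)| ≤ 1 :=
        abs_le.mpr ⟨by linarith [(hssc_mem (dotp wstar x)).1], (hssc_mem (dotp wstar x)).2⟩
      calc |ssc (dotp wstar x) * f x| = |ssc (dotp wstar x)| * |f x| := abs_mul _ _
        _ ≤ 1 * (2 * c) := mul_le_mul habs_ssc hx (abs_nonneg _) zero_le_one
        _ = 2 * c := one_mul _
    rw [hstep1, hA1, hA2, ← integral_sub hIf1 hIf2]
    congr 1; funext x; ring
  -- Δ in terms of the clamped functions
  have hΔ' : Δ = ∫ x, (sc (dotp w x) - ssc (dotp wstar x))^2 ∂D.fst := by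
    rw [hΔ]
    refine integral_congr_ae ?_
    filter_upwards [hXfst] with x hx
    rw [hsceq (hdot w hw x hx), hssceq (hdot wstar hwstar x hx)]
  have hΔnn : 0 ≤ Δ := by
    rw [hΔ']; exact integral_nonneg fun x => sq_nonneg _
  -- integrability of the squared difference and its absolute value
  have hdiff_meas : Measurable fun x => sc (dotp w x) - ssc (dotp wstar x) :=
    (hsc_meas.comp (hdotc w).measurable).sub (hssc_meas.comp (hdotc wstar).measurable)
  have hdiff_abs : ∀ x, |sc (dotp w x) - ssc (dotp wstar x)| ≤ 1 := by
    intro x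
    have h1 := hsc_mem (dotp w x); have h2 := hssc_mem (dotp wstar x)
    rw [abs_le]; constructor
    · linarith [h1.1, h2.2]
    · linarith [h1.2, h2.1]
  have hIsq : Integrable (fun x => (sc (dotp w x) - ssc (dotp wstar x))^2) D.fst := by
    refine hIfst _ 1 (hdiff_meas.pow_const 2) (Filter.Eventually.of_forall fun x => ?_)
    rw [abs_pow]
    have h := hdiff_abs x
    nlinarith [abs_nonneg (sc (dotp w x) - ssc (dotp wstar x))]
  have hIabs : Integrable (fun x => |sc (dotp w x) - ssc (dotp wstar x)|) D.fst :=
    hIfst _ 1 hdiff_meas.abs (Filter.Eventually.of_forall fun x => by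
      rw [abs_abs]; exact hdiff_abs x)
  -- the key algebraic inequality for part (i)
  have halg : ∀ u ∈ Set.Icc (0:ℝ) 1, ∀ v ∈ Set.Icc (0:ℝ) 1,
      (u - v)^2 / β ≤ (u - v) * (gs u - gs v) := by
    intro u hu v hv
    rw [div_le_iff₀ hβ]
    rcases le_total u v with huv | huv
    · nlinarith [mul_le_mul_of_nonneg_left (hss.inv_grow u hu v hv huv)
        (sub_nonneg.mpr huv)]
    · nlinarith [mul_le_mul_of_nonneg_left (hss.inv_grow v hv u hu huv)
        (sub_nonneg.mpr huv)]
  constructor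
  · -- Part (i)
    set f1 : EuclideanSpace ℝ (Fin d) → ℝ :=
      fun x => gsc (sc (dotp w x)) - dotp wstar x with hf1
    have hf1m : Measurable f1 :=
      (hgsc_meas.comp (hsc_meas.comp (hdotc w).measurable)).sub (hdotc wstar).measurable
    have hf1eq : ∀ x, f1 x = gsc (sc (dotp w x)) - dotp wstar x := fun x => rfl
    have hf1b : ∀ᵐ x ∂D.fst, |f1 x| ≤ 2 * c := by
      filter_upwards [hXfst] with x hx
      have h1 := hgsc_mem (sc (dotp w x))
      have h2 := hdot wstar hwstar x hx
      rw [hf1eq, abs_le]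
      constructor
      · linarith [h1.1, h2.2]
      · linarith [h1.2, h2.1]
    -- the target integral equals the clamped one
    have hgoal_eq : (∫ z, (σ (dotp w z.1) - label z.2)
          * (gs (σ (dotp w z.1)) - dotp wstar z.1) ∂D)
        = ∫ z, (sc (dotp w z.1) - label z.2) * f1 z.1 ∂D := by
      refine integral_congr_ae ?_
      filter_upwards [hX] with z hz
      have h2 : sc (dotp w z.1) = σ (dotp w z.1) := hsceq (hdot w hw z.1 hz)
      show _ = (sc (dotp w z.1) - label z.2) * (gsc (sc (dotp w z.1)) - dotp wstar z.1)
      rw [h2, hgsceq (h2 ▸ hsc_mem (dotp w z.1))]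
    rw [hgoal_eq, hkey f1 hf1m hf1b]
    -- pointwise inequality
    have hpt : ∀ᵐ x ∂D.fst,
        (sc (dotp w x) - ssc (dotp wstar x))^2 / β
          ≤ (sc (dotp w x) - ssc (dotp wstar x)) * f1 x := by
      filter_upwards [hXfst] with x hx
      have htst : dotp wstar x ∈ Set.Icc (-c) c := hdot wstar hwstar x hx
      have hum : sc (dotp w x) ∈ Set.Icc (0:ℝ) 1 := hsc_mem _
      have hvm : ss (dotp wstar x) ∈ Set.Icc (0:ℝ) 1 := hss.1.1 _ htst
      have hgv : gs (ss (dotp wstar x)) = dotp wstar x := hss.2.2.2.1 _ htst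
      have h := halg (sc (dotp w x)) hum (ss (dotp wstar x)) hvm
      rw [hgv] at h
      rw [hf1eq, hgsceq hum, hssceq htst]
      exact h
    have hIrhs : Integrable (fun x =>
        (sc (dotp w x) - ssc (dotp wstar x)) * f1 x) D.fst := by
      refine hIfst _ (2 * c) (hdiff_meas.mul hf1m) ?_
      filter_upwards [hf1b] with x hx
      calc |(sc (dotp w x) - ssc (dotp wstar x)) * f1 x|
          = |sc (dotp w x) - ssc (dotp wstar x)| * |f1 x| := abs_mul _ _
        _ ≤ 1 * (2 * c) := mul_le_mul (hdiff_abs x) hx (abs_nonneg _) zero_le_one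
        _ = 2 * c := one_mul _
    have hIlhs : Integrable (fun x =>
        (sc (dotp w x) - ssc (dotp wstar x))^2 / β) D.fst := hIsq.div_const β
    calc Δ / β = ∫ x, (sc (dotp w x) - ssc (dotp wstar x))^2 / β ∂D.fst := by
          rw [hΔ', ← integral_div]
      _ ≤ ∫ x, (sc (dotp w x) - ssc (dotp wstar x)) * f1 x ∂D.fst :=
          integral_mono_ae hIlhs hIrhs hpt
  · -- Part (ii)
    intro σ' g' hlink' w' hw'
    set g'c : ℝ → ℝ := fun v => g' (max 0 (min 1 v)) with hg'c
    have hg'ceq : ∀ {v : ℝ}, v ∈ Set.Icc (0:ℝ) 1 → g'c v = g' v := fun h => by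
      show g' _ = g' _; rw [clampI_eq_s6 h]
    have hg'c_mem : ∀ v, g'c v ∈ Set.Icc (-c) c := fun v =>
      hlink'.2.2.1 _ (clampI_mem_s6 zero_le_one v)
    have hg'c_mono : Monotone g'c := fun a b hab =>
      hlink'.inv_mono _ (clampI_mem_s6 zero_le_one a) _ (clampI_mem_s6 zero_le_one b)
        (clampI_mono_s6 _ _ hab)
    have hg'c_meas : Measurable g'c := hg'c_mono.measurable
    set f2 : EuclideanSpace ℝ (Fin d) → ℝ :=
      fun x => g'c (sc (dotp w x)) - dotp w' x with hf2
    have hf2eq : ∀ x, f2 x = g'c (sc (dotp w x)) - dotp w' x := fun x => rfl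
    have hf2m : Measurable f2 :=
      (hg'c_meas.comp (hsc_meas.comp (hdotc w).measurable)).sub (hdotc w').measurable
    have hf2b : ∀ᵐ x ∂D.fst, |f2 x| ≤ 2 * c := by
      filter_upwards [hXfst] with x hx
      have h1 := hg'c_mem (sc (dotp w x))
      have h2 := hdot w' hw' x hx
      rw [hf2eq, abs_le]
      constructor
      · linarith [h1.1, h2.2]
      · linarith [h1.2, h2.1]
    have hgoal_eq : (∫ z, (σ (dotp w z.1) - label z.2)
          * (g' (σ (dotp w z.1)) - dotp w' z.1) ∂D)
        = ∫ z, (sc (dotp w z.1) - label z.2) * f2 z.1 ∂D := by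
      refine integral_congr_ae ?_
      filter_upwards [hX] with z hz
      have h2 : sc (dotp w z.1) = σ (dotp w z.1) := hsceq (hdot w hw z.1 hz)
      show _ = (sc (dotp w z.1) - label z.2) * (g'c (sc (dotp w z.1)) - dotp w' z.1)
      rw [h2, hg'ceq (h2 ▸ hsc_mem (dotp w z.1))]
    rw [hgoal_eq, hkey f2 hf2m hf2b]
    -- bound the integral
    have hIlhs : Integrable (fun x =>
        (sc (dotp w x) - ssc (dotp wstar x)) * f2 x) D.fst := by
      refine hIfst _ (2 * c) (hdiff_meas.mul hf2m) ?_
      filter_upwards [hf2b] with x hx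
      calc |(sc (dotp w x) - ssc (dotp wstar x)) * f2 x|
          = |sc (dotp w x) - ssc (dotp wstar x)| * |f2 x| := abs_mul _ _
        _ ≤ 1 * (2 * c) := mul_le_mul (hdiff_abs x) hx (abs_nonneg _) zero_le_one
        _ = 2 * c := one_mul _
    have hpt : ∀ᵐ x ∂D.fst,
        (sc (dotp w x) - ssc (dotp wstar x)) * f2 x
          ≤ 2 * c * |sc (dotp w x) - ssc (dotp wstar x)| := by
      filter_upwards [hf2b] with x hx
      calc (sc (dotp w x) - ssc (dotp wstar x)) * f2 x
          ≤ |(sc (dotp w x) - ssc (dotp wstar x)) * f2 x| := le_abs_self _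
        _ = |sc (dotp w x) - ssc (dotp wstar x)| * |f2 x| := abs_mul _ _
        _ ≤ |sc (dotp w x) - ssc (dotp wstar x)| * (2 * c) :=
            mul_le_mul_of_nonneg_left hx (abs_nonneg _)
        _ = 2 * c * |sc (dotp w x) - ssc (dotp wstar x)| := mul_comm _ _
    have hmono := integral_mono_ae hIlhs (hIabs.const_mul (2 * c)) hpt
    rw [integral_const_mul] at hmono
    -- Cauchy–Schwarz (via the second moment)
    have habs_le_sqrt : (∫ x, |sc (dotp w x) - ssc (dotp wstar x)| ∂D.fst)
        ≤ Real.sqrt Δ := by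
      set m := ∫ x, |sc (dotp w x) - ssc (dotp wstar x)| ∂D.fst with hm
      have hmnn : 0 ≤ m := integral_nonneg fun x => abs_nonneg _
      rw [Real.le_sqrt hmnn hΔnn, hΔ']
      have hexp : ∀ x : EuclideanSpace ℝ (Fin d),
          (|sc (dotp w x) - ssc (dotp wstar x)| - m)^2
            = ((sc (dotp w x) - ssc (dotp wstar x))^2
              - 2 * m * |sc (dotp w x) - ssc (dotp wstar x)|) + m^2 := by
        intro x; rw [sub_sq, sq_abs]; ring
      have hnn : 0 ≤ ∫ x, (|sc (dotp w x) - ssc (dotp wstar x)| - m)^2 ∂D.fst :=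
        integral_nonneg fun x => sq_nonneg _
      have heval : (∫ x, (|sc (dotp w x) - ssc (dotp wstar x)| - m)^2 ∂D.fst)
          = (∫ x, (sc (dotp w x) - ssc (dotp wstar x))^2 ∂D.fst) - m^2 := by
        calc (∫ x, (|sc (dotp w x) - ssc (dotp wstar x)| - m)^2 ∂D.fst)
            = ∫ x, (((sc (dotp w x) - ssc (dotp wstar x))^2
                - 2 * m * |sc (dotp w x) - ssc (dotp wstar x)|) + m^2) ∂D.fst :=
              integral_congr_ae (Filter.Eventually.of_forall fun x => hexp x)
          _ = ((∫ x, (sc (dotp w x) - ssc (dotp wstar x))^2 ∂D.fst)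
                - ∫ x, 2 * m * |sc (dotp w x) - ssc (dotp wstar x)| ∂D.fst) + m^2 := by
              have hIsub : Integrable (fun x =>
                  (sc (dotp w x) - ssc (dotp wstar x))^2
                    - 2 * m * |sc (dotp w x) - ssc (dotp wstar x)|) D.fst :=
                hIsq.sub (hIabs.const_mul (2 * m))
              have hImul : Integrable (fun x =>
                  2 * m * |sc (dotp w x) - ssc (dotp wstar x)|) D.fst :=
                hIabs.const_mul (2 * m)
              rw [integral_add hIsub (integrable_const _),
                integral_sub hIsq hImul, integral_const]
              simp [measure_univ]
          _ = (∫ x, (sc (dotp w x) - ssc (dotp wstar x))^2 ∂D.fst) - m^2 := by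
              rw [integral_const_mul, ← hm]; ring
      nlinarith [heval ▸ hnn]
    calc (∫ x, (sc (dotp w x) - ssc (dotp wstar x)) * f2 x ∂D.fst)
        ≤ 2 * c * ∫ x, |sc (dotp w x) - ssc (dotp wstar x)| ∂D.fst := hmono
      _ ≤ 2 * c * Real.sqrt Δ :=
          mul_le_mul_of_nonneg_left habs_le_sqrt (by linarith)
      _ = 2 * L * R * Real.sqrt Δ := by rw [hcdef]; ring
end

section
/- Let L, R, β > 0 and ε ∈ (0,1). Let S be the family of all non-decreasing β-Lipschitz functions σ : [−LR, LR] → [0,1]. Then there exists a subset S′ ⊆ S with cardinality at most (4/ε)·2^{2βLR/ε} such that for every σ ∈ S there exists σ′ ∈ S′ with sup_{t ∈ [−LR,LR]} |σ(t) − σ′(t)| ≤ ε. -/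
open Finset

noncomputable def ramp (h t : ℝ) : ℝ := max 0 (min t h)

noncomputable def inr (β h x0 ε : ℝ) (a m : ℕ) (b : ℕ → Bool) (t : ℝ) : ℝ :=
  ε * a + ∑ i ∈ Finset.range m, (if b i then β * ramp h (t - (x0 + i * h)) else 0)

lemma ramp_nonneg (h t : ℝ) : 0 ≤ ramp h t := le_max_left _ _

lemma ramp_mono (h : ℝ) {s t : ℝ} (hst : s ≤ t) : ramp h s ≤ ramp h t :=
  max_le_max le_rfl (min_le_min hst le_rfl)

set_option maxHeartbeats 1000000 in
lemma ramp_term_le (β h xk : ℝ) (hβ : 0 ≤ β) (hh : 0 ≤ h) {s t : ℝ} (hst : s ≤ t) :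
    β * ramp h (t - xk) - β * ramp h (s - xk) ≤ β * max 0 (min t (xk + h) - max s xk) := by
  rw [← mul_sub]
  apply mul_le_mul_of_nonneg_left _ hβ
  unfold ramp
  rcases le_total s xk with h1 | h1 <;>
  rcases le_total t (xk + h) with h2 | h2 <;>
  simp only [max_def, min_def] <;> split_ifs <;> linarith

set_option maxHeartbeats 1000000 in
lemma max_combine (s t xk h : ℝ) (hst : s ≤ t) (hh : 0 ≤ h) :
    max 0 (min t xk - s) + max 0 (min t (xk + h) - max s xk) ≤ max 0 (min t (xk + h) - s) := by
  rcases le_total s xk with h1 | h1 <;>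
  rcases le_total t xk with h2 | h2 <;>
  rcases le_total t (xk + h) with h3 | h3 <;>
  simp only [max_def, min_def] <;> split_ifs <;> linarith

lemma sum_lip (β h x0 : ℝ) (hβ : 0 ≤ β) (hh : 0 ≤ h) (b : ℕ → Bool) (k : ℕ) {s t : ℝ} (hst : s ≤ t) :
    (∑ i ∈ range k, (if b i then β * ramp h (t - (x0 + i * h)) else 0)) -
      (∑ i ∈ range k, (if b i then β * ramp h (s - (x0 + i * h)) else 0)) ≤
      β * max 0 (min t (x0 + k * h) - s) := by
  induction k with
  | zero => simpa using mul_nonneg hβ (le_max_left _ _)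
  | succ k ih =>
    rw [sum_range_succ, sum_range_succ]
    have hterm : (if b k then β * ramp h (t - (x0 + k * h)) else 0) -
        (if b k then β * ramp h (s - (x0 + k * h)) else 0) ≤
        β * max 0 (min t ((x0 + k * h) + h) - max s (x0 + k * h)) := by
      by_cases hb : b k
      · simp only [hb, if_true]; exact ramp_term_le β h (x0 + k * h) hβ hh hst
      · rw [if_neg hb, if_neg hb]
        simpa using mul_nonneg hβ (le_max_left _ _)
    have hcomb := max_combine s t (x0 + k * h) h hst hh
    have hx : x0 + (k + 1 : ℕ) * h = (x0 + k * h) + h := by push_cast; ring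
    rw [hx]
    nlinarith [mul_le_mul_of_nonneg_left hcomb hβ]

lemma inr_mono (β h x0 ε : ℝ) (hβ : 0 ≤ β) (a m : ℕ) (b : ℕ → Bool) {s t : ℝ} (hst : s ≤ t) :
    inr β h x0 ε a m b s ≤ inr β h x0 ε a m b t := by
  unfold inr
  gcongr with i hi
  by_cases hb : b i
  · simp only [hb, if_true]
    exact mul_le_mul_of_nonneg_left (ramp_mono h (by linarith)) hβ
  · simp [hb]

lemma inr_lip (β h x0 ε : ℝ) (hβ : 0 ≤ β) (hh : 0 ≤ h) (a m : ℕ) (b : ℕ → Bool) {s t : ℝ} (hst : s ≤ t) :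
    inr β h x0 ε a m b t - inr β h x0 ε a m b s ≤ β * (t - s) := by
  unfold inr
  have h1 := sum_lip β h x0 hβ hh b m hst
  have h2 : max 0 (min t (x0 + m * h) - s) ≤ t - s := by
    rcases le_total t (x0 + m * h) with h3 | h3 <;> simp only [max_def, min_def] <;> split_ifs <;> linarith
  nlinarith [mul_le_mul_of_nonneg_left h2 hβ]

lemma inr_nonneg (β h x0 ε : ℝ) (hβ : 0 ≤ β) (hε : 0 ≤ ε) (a m : ℕ) (b : ℕ → Bool) (t : ℝ) :
    0 ≤ inr β h x0 ε a m b t := by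
  unfold inr
  have h1 : 0 ≤ ε * a := mul_nonneg hε (Nat.cast_nonneg a)
  have h2 : 0 ≤ ∑ i ∈ range m, (if b i then β * ramp h (t - (x0 + i * h)) else 0) := by
    apply Finset.sum_nonneg
    intro i _
    by_cases hb : b i
    · simp only [hb, if_true]; exact mul_nonneg hβ (ramp_nonneg _ _)
    · simp [hb]
  linarith

lemma inr_eval (β h x0 ε : ℝ) (hh : 0 ≤ h) (a m : ℕ) (b : ℕ → Bool) (k : ℕ) (hk : k < m)
    {t : ℝ} (ht1 : x0 + k * h ≤ t) (ht2 : t ≤ x0 + (k + 1 : ℕ) * h) :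
    inr β h x0 ε a m b t =
      ε * a + (∑ i ∈ range k, (if b i then β * h else 0)) +
        (if b k then β * (t - (x0 + k * h)) else 0) := by
  unfold inr
  have hsub : ∑ i ∈ range m, (if b i then β * ramp h (t - (x0 + i * h)) else 0) =
      ∑ i ∈ range (k+1), (if b i then β * ramp h (t - (x0 + i * h)) else 0) := by
    symm
    apply Finset.sum_subset (Finset.range_subset_range.mpr hk)
    intro i hi hni
    simp only [mem_range] at hi hni
    have hik : k + 1 ≤ i := by omega
    have : t - (x0 + i * h) ≤ 0 := by
      have : (k + 1 : ℝ) * h ≤ i * h := by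
        apply mul_le_mul_of_nonneg_right _ hh
        exact_mod_cast hik
      push_cast at ht2 ⊢
      nlinarith
    have hr : ramp h (t - (x0 + i * h)) = 0 := by
      unfold ramp
      have : min (t - (x0 + i * h)) h ≤ 0 := le_trans (min_le_left _ _) this
      simp [max_eq_left this]
    rw [hr]
    simp
  rw [hsub, sum_range_succ]
  have hcongr : ∑ i ∈ range k, (if b i then β * ramp h (t - (x0 + i * h)) else 0) =
      ∑ i ∈ range k, (if b i then β * h else 0) := by
    apply Finset.sum_congr rfl
    intro i hi
    simp only [mem_range] at hi
    have : h ≤ t - (x0 + i * h) := by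
      have h1 : ((i : ℝ) + 1) * h ≤ k * h := by
        apply mul_le_mul_of_nonneg_right _ hh
        exact_mod_cast hi
      nlinarith
    have hr : ramp h (t - (x0 + i * h)) = h := by
      unfold ramp
      rw [min_eq_right this, max_eq_right hh]
    rw [hr]
  rw [hcongr]
  have hrk : ramp h (t - (x0 + k * h)) = t - (x0 + k * h) := by
    unfold ramp
    have h1 : t - (x0 + k * h) ≤ h := by push_cast at ht2; nlinarith
    rw [min_eq_left h1, max_eq_right (by linarith)]
  rw [hrk]
  ring

lemma count_sum (ε : ℝ) (c : ℕ → ℕ) (b : ℕ → Bool) (k : ℕ)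
    (hc : ∀ i, i < k → c i ≤ c (i+1) ∧ c (i+1) ≤ c i + 1)
    (hb : ∀ i, i < k → (b i = true ↔ c (i+1) = c i + 1)) :
    ∑ i ∈ range k, (if b i then ε else 0) = ε * c k - ε * c 0 := by
  induction k with
  | zero => simp
  | succ k ih =>
    rw [sum_range_succ, ih (fun i hi => hc i (by omega)) (fun i hi => hb i (by omega))]
    by_cases hbk : b k = true
    · have := (hb k (by omega)).mp hbk
      rw [this]
      simp [hbk]
      push_cast
      ring
    · have h1 := hc k (by omega)
      have h2 : ¬ (c (k+1) = c k + 1) := fun hh => hbk ((hb k (by omega)).mpr hh)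
      have : c (k+1) = c k := by omega
      rw [this]
      simp [hbk]
set_option maxHeartbeats 1000000 in
lemma clamp_lip (D s t : ℝ) (hst : s ≤ t) :
    max (-D) (min t D) - max (-D) (min s D) ≤ t - s := by
  rcases le_total s D with h1 | h1 <;> rcases le_total t D with h2 | h2 <;>
  rcases le_total s (-D) with h3 | h3 <;> rcases le_total t (-D) with h4 | h4 <;>
  simp only [max_def, min_def] <;> split_ifs <;> linarith

set_option maxHeartbeats 1000000 in
/-- The family of non-decreasing `β`-Lipschitz links `[-LR, LR] → [0,1]` admits an
`ε`-cover in the sup norm of cardinality at most `(4/ε)·2^{2βLR/ε}`. -/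
theorem cover_monotone_lipschitz_links
    (L R β ε : ℝ) (hL : 0 < L) (hR : 0 < R) (hβ : 0 < β)
    (hε : ε ∈ Set.Ioo (0:ℝ) 1) :
    ∃ S' : Finset (ℝ → ℝ),
      (S'.card : ℝ) ≤ (4 / ε) * (2:ℝ) ^ (2 * β * L * R / ε) ∧
      (∀ σ' ∈ S',
        (∀ t ∈ Set.Icc (-(L*R)) (L*R), σ' t ∈ Set.Icc (0:ℝ) 1) ∧
        BiLipOn 0 β σ' (Set.Icc (-(L*R)) (L*R))) ∧
      ∀ σ : ℝ → ℝ,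
        (∀ t ∈ Set.Icc (-(L*R)) (L*R), σ t ∈ Set.Icc (0:ℝ) 1) →
        BiLipOn 0 β σ (Set.Icc (-(L*R)) (L*R)) →
        ∃ σ' ∈ S', ∀ t ∈ Set.Icc (-(L*R)) (L*R), |σ t - σ' t| ≤ ε := by
  classical
  obtain ⟨hε0, hε1⟩ := hε
  set q := 2 * β * L * R / ε with hqdef
  set D := L * R with hDdef
  have hD : 0 < D := mul_pos hL hR
  set h := ε / β with hhdef
  have hh : 0 < h := div_pos hε0 hβ
  have hβh : β * h = ε := by rw [hhdef]; field_simp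
  have hq : 0 < q := by rw [hqdef]; positivity
  have hqh : q * h = 2 * D := by
    rw [hqdef, hhdef, hDdef]; field_simp
  set m := ⌈q⌉₊ with hmdef
  have hm1 : 1 ≤ m := Nat.one_le_iff_ne_zero.mpr (Nat.ceil_pos.mpr hq).ne'
  have hqm : q ≤ (m : ℝ) := Nat.le_ceil q
  have hmq : (m : ℝ) ≤ q + 1 := (Nat.ceil_lt_add_one hq.le).le
  have hmh : 2 * D ≤ (m : ℝ) * h := by
    rw [← hqh]; exact mul_le_mul_of_nonneg_right hqm hh.le
  set N := ⌊1/ε⌋₊ with hNdef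
  -- the extension of a boolean vector
  let ext : (Fin m → Bool) → (ℕ → Bool) := fun b i => if hi : i < m then b ⟨i, hi⟩ else false
  let F : ℕ × (Fin m → Bool) → (ℝ → ℝ) := fun p t => min 1 (inr β h (-D) ε p.1 m (ext p.2) t)
  refine ⟨Finset.image F ((Finset.range (N+1)) ×ˢ (Finset.univ : Finset (Fin m → Bool))), ?_, ?_, ?_⟩
  · -- cardinality bound
    have hcard : (Finset.image F ((Finset.range (N+1)) ×ˢ Finset.univ)).card ≤ (N+1) * 2^m := by
      refine le_trans (Finset.card_image_le) ?_
      rw [Finset.card_product, Finset.card_range, Finset.card_univ]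
      simp [Fintype.card_fun]
    refine le_trans (Nat.cast_le.mpr hcard) ?_
    push_cast
    have h1 : (N : ℝ) + 1 ≤ 2 / ε := by
      have hN : (N : ℝ) ≤ 1 / ε := Nat.floor_le (by positivity)
      have h1' : (1:ℝ) ≤ 1 / ε := by rw [le_div_iff₀ hε0]; linarith
      have h2' : (2:ℝ) / ε = 1 / ε + 1 / ε := by ring
      linarith
    have h2 : ((2:ℝ))^(m:ℕ) ≤ (2:ℝ)^q * 2 := by
      rw [← Real.rpow_natCast 2 m]
      calc (2:ℝ) ^ (m : ℝ) ≤ (2:ℝ) ^ (q + 1) :=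
            Real.rpow_le_rpow_of_exponent_le one_le_two hmq
        _ = (2:ℝ)^q * 2 := by rw [Real.rpow_add two_pos, Real.rpow_one]
    have h3 : (0:ℝ) ≤ (2:ℝ)^(m:ℕ) := by positivity
    have h4 : (0:ℝ) ≤ 2 / ε := by positivity
    calc ((N:ℝ) + 1) * 2^(m:ℕ) ≤ (2/ε) * ((2:ℝ)^q * 2) := mul_le_mul h1 h2 h3 h4
      _ = 4 / ε * (2:ℝ)^q := by ring
  · -- every element of the cover is a valid link
    intro σ' hσ'
    obtain ⟨p, hp, rfl⟩ := Finset.mem_image.mp hσ'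
    constructor
    · intro t ht
      exact ⟨le_min zero_le_one (inr_nonneg β h (-D) ε hβ.le hε0.le _ _ _ t), min_le_left _ _⟩
    · intro x hx y hy hxy
      have hmono := inr_mono β h (-D) ε hβ.le p.1 m (ext p.2) hxy
      have hlip := inr_lip β h (-D) ε hβ.le hh.le p.1 m (ext p.2) hxy
      constructor
      · rw [zero_mul, sub_nonneg]
        exact min_le_min le_rfl hmono
      · have : min 1 (inr β h (-D) ε p.1 m (ext p.2) y) -
            min 1 (inr β h (-D) ε p.1 m (ext p.2) x) ≤
            inr β h (-D) ε p.1 m (ext p.2) y - inr β h (-D) ε p.1 m (ext p.2) x := by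
          rcases le_total (inr β h (-D) ε p.1 m (ext p.2) x) 1 with h1 | h1 <;>
          rcases le_total (inr β h (-D) ε p.1 m (ext p.2) y) 1 with h2 | h2 <;>
          simp only [min_def] <;> split_ifs <;> linarith
        linarith
  · -- covering property
    intro σ hr hl
    set cl : ℝ → ℝ := fun t => max (-D) (min t D) with hcldef
    have hclIcc : ∀ t, cl t ∈ Set.Icc (-D) D :=
      fun t => ⟨le_max_left _ _, max_le (by linarith) (min_le_right _ _)⟩
    have hclmono : ∀ {s t : ℝ}, s ≤ t → cl s ≤ cl t := by
      intro s t hst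
      exact max_le_max le_rfl (min_le_min hst le_rfl)
    have hcleq : ∀ t ∈ Set.Icc (-D) D, cl t = t := by
      intro t ht
      rw [hcldef]
      simp only
      rw [min_eq_left ht.2, max_eq_right ht.1]
    set x : ℕ → ℝ := fun i => -D + i * h with hxdef
    have hxmono : ∀ i : ℕ, x i ≤ x (i+1) := by
      intro i; rw [hxdef]; simp only; push_cast; nlinarith
    have hxlb : ∀ i : ℕ, -D ≤ x i := by
      intro i; rw [hxdef]; simp only
      nlinarith [mul_nonneg (Nat.cast_nonneg i : (0:ℝ) ≤ (i:ℝ)) hh.le]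
    set c : ℕ → ℕ := fun i => ⌊σ (cl (x i)) / ε⌋₊ with hcdef
    have hσ01 : ∀ i : ℕ, σ (cl (x i)) ∈ Set.Icc (0:ℝ) 1 := fun i => hr _ (hclIcc _)
    have hflo : ∀ i : ℕ, ε * c i ≤ σ (cl (x i)) := by
      intro i
      have := Nat.floor_le (div_nonneg (hσ01 i).1 hε0.le)
      rw [hcdef]
      calc ε * (⌊σ (cl (x i)) / ε⌋₊ : ℝ) ≤ ε * (σ (cl (x i)) / ε) :=
            mul_le_mul_of_nonneg_left this hε0.le
        _ = σ (cl (x i)) := by field_simp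
    have hfhi : ∀ i : ℕ, σ (cl (x i)) < ε * (c i + 1) := by
      intro i
      have := Nat.lt_floor_add_one (σ (cl (x i)) / ε)
      rw [hcdef]
      calc σ (cl (x i)) = ε * (σ (cl (x i)) / ε) := by field_simp
        _ < ε * ((⌊σ (cl (x i)) / ε⌋₊ : ℝ) + 1) := by
            exact mul_lt_mul_of_pos_left this hε0
    have hstep : ∀ i : ℕ, 0 ≤ σ (cl (x (i+1))) - σ (cl (x i)) ∧
        σ (cl (x (i+1))) - σ (cl (x i)) ≤ ε := by
      intro i
      have h1 : cl (x i) ≤ cl (x (i+1)) := hclmono (hxmono i)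
      have h2 := hl (hclIcc (x i)) (hclIcc (x (i+1))) h1
      have h3 : cl (x (i+1)) - cl (x i) ≤ h := by
        have e1 : x (i+1) = x i + h := by rw [hxdef]; push_cast; ring
        have := clamp_lip D (x i) (x (i+1)) (hxmono i)
        rw [hcldef]
        simp only
        linarith
      constructor
      · have := h2.1; linarith [this]
      · have := h2.2
        nlinarith [mul_le_mul_of_nonneg_left h3 hβ.le]
    have hc1 : ∀ i : ℕ, c i ≤ c (i+1) := by
      intro i
      apply Nat.floor_le_floor
      apply div_le_div_of_nonneg_right ?_ hε0.le
      linarith [(hstep i).1]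
    have hc2 : ∀ i : ℕ, c (i+1) ≤ c i + 1 := by
      intro i
      have h1 : σ (cl (x (i+1))) / ε ≤ σ (cl (x i)) / ε + 1 := by
        rw [div_add' _ _ _ hε0.ne']
        apply div_le_div_of_nonneg_right ?_ hε0.le
        linarith [(hstep i).2]
      calc c (i+1) ≤ ⌊σ (cl (x i)) / ε + 1⌋₊ := Nat.floor_le_floor h1
        _ = c i + 1 := by
            rw [Nat.floor_add_one (div_nonneg (hσ01 i).1 hε0.le)]
    -- the chosen parameters
    have haN : c 0 ∈ Finset.range (N+1) := by
      rw [Finset.mem_range, Nat.lt_succ_iff, hNdef]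
      apply Nat.floor_le_floor
      exact div_le_div_of_nonneg_right (hσ01 0).2 hε0.le
    set b' : Fin m → Bool := fun i => decide (c (i.val + 1) = c i.val + 1) with hbdef
    refine ⟨F (c 0, b'), Finset.mem_image.mpr ⟨(c 0, b'), Finset.mem_product.mpr ⟨haN, Finset.mem_univ _⟩, rfl⟩, ?_⟩
    intro t ht
    -- find the grid interval containing t
    set u := (t + D) / h with hudef
    have hu0 : 0 ≤ u := by
      rw [hudef]; apply div_nonneg _ hh.le; linarith [ht.1]
    set k := min (m-1) ⌊u⌋₊ with hkdef
    have hkm : k < m := by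
      have : k ≤ m - 1 := min_le_left _ _
      omega
    have hx1 : x k ≤ t := by
      have h1 : (k : ℝ) ≤ u := by
        have : k ≤ ⌊u⌋₊ := min_le_right _ _
        calc (k:ℝ) ≤ (⌊u⌋₊ : ℝ) := by exact_mod_cast this
          _ ≤ u := Nat.floor_le hu0
      have h2 : (k:ℝ) * h ≤ t + D := by
        calc (k:ℝ) * h ≤ u * h := mul_le_mul_of_nonneg_right h1 hh.le
          _ = t + D := by rw [hudef]; field_simp
      rw [hxdef]; simp only; linarith
    have hx2 : t ≤ x (k+1) := by
      have h1 : u ≤ (k:ℝ) + 1 := by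
        rcases le_total (⌊u⌋₊) (m-1) with hcase | hcase
        · have hk : k = ⌊u⌋₊ := min_eq_right hcase
          rw [hk]
          exact (Nat.lt_floor_add_one u).le
        · have hk : k = m - 1 := min_eq_left hcase
          have hkm' : (k : ℝ) + 1 = m := by
            rw [hk]
            have : ((m - 1 : ℕ) : ℝ) = (m : ℝ) - 1 := by
              rw [Nat.cast_sub hm1]; simp
            rw [this]; ring
          rw [hkm']
          have : t + D ≤ 2 * D := by linarith [ht.2]
          calc u = (t + D) / h := hudef
            _ ≤ (2 * D) / h := div_le_div_of_nonneg_right this hh.le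
            _ ≤ ((m:ℝ) * h) / h := div_le_div_of_nonneg_right hmh hh.le
            _ = (m : ℝ) := by field_simp
      have : t + D ≤ ((k:ℝ) + 1) * h := by
        calc t + D = u * h := by rw [hudef]; field_simp
          _ ≤ ((k:ℝ)+1) * h := mul_le_mul_of_nonneg_right h1 hh.le
      rw [hxdef]; simp only; push_cast; linarith
    -- evaluate inr at t
    have hbext : (ext b') k = decide (c (k + 1) = c k + 1) := by
      simp only [ext, dif_pos hkm, hbdef]
    have hx1' : -D + (k:ℝ) * h ≤ t := hx1
    have hx2' : t ≤ -D + ((k+1:ℕ):ℝ) * h := hx2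
    have hval := inr_eval β h (-D) ε hh.le (c 0) m (ext b') k hkm hx1' hx2'
    rw [hβh] at hval
    have hcount := count_sum ε c (ext b') k
      (fun i _ => ⟨hc1 i, hc2 i⟩)
      (by
        intro i hi
        have him : i < m := lt_trans hi hkm
        simp only [ext, dif_pos him, hbdef]
        exact decide_eq_true_iff)
    rw [hcount] at hval
    -- key facts about x k and x (k+1)
    have hxkIcc : x k ∈ Set.Icc (-D) D := ⟨hxlb k, le_trans hx1 ht.2⟩
    have hclxk : cl (x k) = x k := hcleq _ hxkIcc
    have htle : t ≤ cl (x (k+1)) := by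
      rw [hcldef]; simp only
      exact le_max_of_le_right (le_min hx2 ht.2)
    have hclle : cl (x (k+1)) ≤ x (k+1) := by
      rw [hcldef]; simp only
      exact max_le (hxlb (k+1)) (min_le_left _ _)
    have hxk1 : x (k+1) = x k + h := by rw [hxdef]; push_cast; ring
    -- two-sided bound
    have hgle : inr β h (-D) ε (c 0) m (ext b') t ≤ σ t ∧
        σ t ≤ inr β h (-D) ε (c 0) m (ext b') t + ε := by
      by_cases hB : c (k+1) = c k + 1
      · have hbk : (ext b') k = true := by rw [hbext]; exact decide_eq_true hB
        rw [hbk] at hval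
        simp only [if_true] at hval
        have hg : inr β h (-D) ε (c 0) m (ext b') t = ε * c k + β * (t - (-D + k * h)) := by
          rw [hval]; ring
        have hxkt : x k = -D + (k:ℝ) * h := by rw [hxdef]
        constructor
        · -- lower bound
          have h1 := (hl ht (hclIcc (x (k+1))) htle).2
          have h2 := hflo (k+1)
          have h3 : ε * ((c k : ℝ) + 1) = ε * (c (k+1) : ℝ) := by
            rw [hB]; push_cast; ring
          have hmul : β * (cl (x (k+1)) - t) ≤ β * (x (k+1) - t) :=
            mul_le_mul_of_nonneg_left (sub_le_sub_right hclle t) hβ.le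
          have hβe : β * (x (k+1) - t) = β * h - β * (t - (-D + (k:ℝ) * h)) := by
            rw [hxdef]; push_cast; ring
          rw [hg]
          linarith only [h1, hmul, h2, h3, hβh, hβe]
        · -- upper bound
          have h1 := (hl hxkIcc ht hx1).2
          have h2 := hfhi k
          rw [hclxk] at h2
          have heq : β * (t - x k) = β * (t - (-D + (k:ℝ) * h)) := by
            rw [hxdef]
          rw [hg]
          linarith only [h1, h2, heq]
      · have hck : c (k+1) = c k := by
          have := hc1 k; have := hc2 k; omega
        have hbk : (ext b') k = false := by
          rw [hbext]; exact decide_eq_false hB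
        rw [hbk] at hval
        simp only [Bool.false_eq_true, if_false, add_zero] at hval
        have hg : inr β h (-D) ε (c 0) m (ext b') t = ε * c k := by
          rw [hval]; ring
        constructor
        · have h1 := (hl hxkIcc ht hx1).1
          have h2 := hflo k
          rw [hclxk] at h2
          rw [hg]
          linarith only [h1, h2]
        · have h1 := (hl ht (hclIcc (x (k+1))) htle).1
          have h2 := hfhi (k+1)
          rw [hck] at h2
          rw [hg]
          linarith only [h1, h2]
    -- conclude
    have hσt1 : σ t ≤ 1 := (hr t ht).2
    have hFeq : F (c 0, b') t = inr β h (-D) ε (c 0) m (ext b') t := by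
      simp only [F]
      exact min_eq_right (le_trans hgle.1 hσt1)
    rw [hFeq]
    rw [abs_le]
    constructor
    · linarith only [hgle.1, hε0]
    · linarith only [hgle.2]
end

section
/- Let F be the set of all non-decreasing functions f : ℝ → [0,1], let n ≥ 2, ε ∈ (0, 1/3), and let x_1, …, x_n ∈ ℝ. Then there exists a subset F′ ⊆ F with cardinality at most (n+1)^{⌈1/ε⌉} such that for every f ∈ F there exists f′ ∈ F′ with max_{i ∈ [n]} |f(x_i) − f′(x_i)| ≤ ε. -/
/-- Counting lemma: the number of elements of `Fin K` below `m ≤ K` is `m`. -/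
theorem aux_card_filter_lt (K m : ℕ) (h : m ≤ K) :
    (Finset.univ.filter fun ℓ : Fin K => (ℓ:ℕ) < m).card = m := by
  classical
  have := Finset.card_bij (s := Finset.univ.filter fun ℓ : Fin K => (ℓ:ℕ) < m)
    (t := Finset.range m) (fun ℓ _ => (ℓ:ℕ))
    (by intro a ha; simp at ha ⊢; exact ha)
    (by intro a _ b _ hab; exact Fin.ext hab)
    (by intro b hb; simp at hb; exact ⟨⟨b, lt_of_lt_of_le hb h⟩, by simp [hb], rfl⟩)
  simpa using this

/-- The class of bounded non-decreasing functions `ℝ → [0,1]` admits an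
`(ε, {x_i})`-cover of cardinality at most `(n+1)^⌈1/ε⌉` on any `n` sample points. -/
theorem cover_monotone_functions
    (n : ℕ) (hn : 2 ≤ n) (ε : ℝ) (hε : ε ∈ Set.Ioo (0:ℝ) (1/3))
    (x : Fin n → ℝ) :
    ∃ F' : Finset (ℝ → ℝ),
      F'.card ≤ (n + 1) ^ (⌈1 / ε⌉₊) ∧
      (∀ f' ∈ F', Monotone f' ∧ ∀ t : ℝ, f' t ∈ Set.Icc (0:ℝ) 1) ∧
      ∀ f : ℝ → ℝ, Monotone f → (∀ t : ℝ, f t ∈ Set.Icc (0:ℝ) 1) →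
        ∃ f' ∈ F', ∀ i : Fin n, |f (x i) - f' (x i)| ≤ ε := by
  classical
  obtain ⟨hε0, hε3⟩ := hε
  set K := ⌈1 / ε⌉₊ with hK
  -- the candidate step functions, indexed by a threshold index for each of `K` levels
  set G : (Fin K → Fin (n+1)) → (ℝ → ℝ) := fun d t =>
    min 1 (ε * ((Finset.univ.filter (fun ℓ : Fin K =>
      ∃ h : (d ℓ : ℕ) < n, x ⟨d ℓ, h⟩ ≤ t)).card : ℝ)) with hGdef
  refine ⟨Finset.image G Finset.univ, ?_, ?_, ?_⟩
  · calc (Finset.image G Finset.univ).card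
        ≤ (Finset.univ : Finset (Fin K → Fin (n+1))).card := Finset.card_image_le
      _ = (n + 1) ^ K := by
          simp [Finset.card_univ, Fintype.card_fun]
  · rintro f' hf'
    obtain ⟨d, -, rfl⟩ := Finset.mem_image.mp hf'
    constructor
    · intro s t hst
      refine min_le_min le_rfl (mul_le_mul_of_nonneg_left ?_ hε0.le)
      have : (Finset.univ.filter (fun ℓ : Fin K =>
            ∃ h : (d ℓ : ℕ) < n, x ⟨d ℓ, h⟩ ≤ s)) ⊆
          (Finset.univ.filter (fun ℓ : Fin K =>
            ∃ h : (d ℓ : ℕ) < n, x ⟨d ℓ, h⟩ ≤ t)) := by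
        intro ℓ hℓ
        simp only [Finset.mem_filter, Finset.mem_univ, true_and] at hℓ ⊢
        obtain ⟨h, hx⟩ := hℓ
        exact ⟨h, hx.trans hst⟩
      exact_mod_cast Finset.card_le_card this
    · intro t
      constructor
      · exact le_min zero_le_one (mul_nonneg hε0.le (Nat.cast_nonneg _))
      · exact min_le_left _ _
  · intro f hf hf01
    set m : Fin n → ℕ := fun i => ⌊f (x i) / ε⌋₊ with hm
    -- level sets
    have hmono : ∀ i j : Fin n, x i ≤ x j → m i ≤ m j := by
      intro i j hij
      exact Nat.floor_le_floor (by gcongr; exact hf hij)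
    have hmK : ∀ i, m i ≤ K := by
      intro i
      have h1 : f (x i) / ε ≤ 1 / ε := by gcongr; exact (hf01 (x i)).2
      exact (Nat.floor_le_floor h1).trans (Nat.floor_le_ceil _)
    -- choose thresholds
    have exd : ∀ ℓ : Fin K, ∃ v : Fin (n+1), ∀ t : ℝ,
        (∃ h : (v : ℕ) < n, x ⟨v, h⟩ ≤ t) ↔ (∃ i : Fin n, (ℓ:ℕ) < m i ∧ x i ≤ t) := by
      intro ℓ
      by_cases hne : (Finset.univ.filter fun i : Fin n => (ℓ:ℕ) < m i).Nonempty
      · obtain ⟨i₀, hi₀, hmin⟩ := Finset.exists_min_image _ x hne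
        simp only [Finset.mem_filter, Finset.mem_univ, true_and] at hi₀ hmin
        refine ⟨⟨(i₀:ℕ), lt_trans i₀.isLt (Nat.lt_succ_self n)⟩, fun t => ?_⟩
        constructor
        · rintro ⟨h, hx⟩
          exact ⟨i₀, hi₀, by simpa using hx⟩
        · rintro ⟨i, hi, hx⟩
          exact ⟨i₀.isLt, by simpa using (hmin i hi).trans hx⟩
      · refine ⟨Fin.last n, fun t => ?_⟩
        constructor
        · rintro ⟨h, -⟩
          exact absurd h (by simp)
        · rintro ⟨i, hi, -⟩
          exact absurd (Finset.mem_filter.mpr ⟨Finset.mem_univ i, hi⟩) (fun hmem => hne ⟨i, hmem⟩)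
    choose d hd using exd
    refine ⟨G d, Finset.mem_image_of_mem G (Finset.mem_univ d), ?_⟩
    intro i
    have hfi0 : (0:ℝ) ≤ f (x i) := (hf01 (x i)).1
    have hfloor_le : ε * (m i : ℝ) ≤ f (x i) := by
      have := Nat.floor_le (div_nonneg hfi0 hε0.le)
      calc ε * (m i : ℝ) ≤ ε * (f (x i) / ε) := by
            exact mul_le_mul_of_nonneg_left this hε0.le
        _ = f (x i) := by field_simp
    -- compute G d (x i)
    have hfilter : (Finset.univ.filter (fun ℓ : Fin K =>
        ∃ h : (d ℓ : ℕ) < n, x ⟨d ℓ, h⟩ ≤ x i)) =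
        (Finset.univ.filter fun ℓ : Fin K => (ℓ:ℕ) < m i) := by
      ext ℓ
      simp only [Finset.mem_filter, Finset.mem_univ, true_and]
      rw [hd ℓ (x i)]
      constructor
      · rintro ⟨j, hj, hxj⟩
        exact lt_of_lt_of_le hj (hmono j i hxj)
      · intro h
        exact ⟨i, h, le_refl _⟩
    have hcard : ((Finset.univ.filter (fun ℓ : Fin K =>
        ∃ h : (d ℓ : ℕ) < n, x ⟨d ℓ, h⟩ ≤ x i)).card : ℝ) = (m i : ℝ) := by
      rw [hfilter, aux_card_filter_lt K (m i) (hmK i)]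
    have hGval : G d (x i) = ε * (m i : ℝ) := by
      simp only [hGdef]
      rw [hcard]
      exact min_eq_right (hfloor_le.trans (hf01 (x i)).2)
    rw [hGval]
    rw [abs_le]
    constructor
    · linarith [hfloor_le, hε0]
    · -- f (x i) - ε * m i ≤ ε
      have h2 : f (x i) / ε - 1 < (m i : ℝ) := Nat.sub_one_lt_floor _
      have h3 : f (x i) - ε < ε * (m i : ℝ) := by
        have := mul_lt_mul_of_pos_left h2 hε0
        calc f (x i) - ε = ε * (f (x i) / ε - 1) := by rw [mul_sub, mul_one, mul_div_cancel₀ _ hε0.ne']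
          _ < ε * (m i : ℝ) := this
      linarith
end
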